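/- arXiv:1903.03089 — 12 statements merged into one kernel-verified Lean document; each statement's English description precedes it below -/
import Mathlib

section
/- Let A be an invertible two-level sparse matrix built from blocks A₁₁, A₁₂,ᵢ, A₂₂,ᵢ (1 ≤ i ≤ m), and suppose each A₂₂,ᵢ is invertible. Then the p×p matrix A₁₁ − Σ_{i=1}^m A₁₂,ᵢ A₂₂,ᵢ⁻¹ A₁₂,ᵢᵀ is invertible and the sub-block A¹¹ of A⁻¹ satisfies A¹¹ = (A₁₁ − Σ_{i=1}^m A₁₂,ᵢ A₂₂,ᵢ⁻¹ A₁₂,ᵢᵀ)⁻¹. -/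
open Matrix

/-- The two-level sparse matrix built from blocks `A11`, `A12 i`, `A22 i`. -/
def twoLevelSparse {p q m : ℕ}
    (A11 : Matrix (Fin p) (Fin p) ℝ)
    (A12 : Fin m → Matrix (Fin p) (Fin q) ℝ)
    (A22 : Fin m → Matrix (Fin q) (Fin q) ℝ) :
    Matrix (Fin p ⊕ Fin m × Fin q) (Fin p ⊕ Fin m × Fin q) ℝ :=
  Matrix.of fun x y =>
    match x, y with
    | Sum.inl a, Sum.inl b => A11 a b
    | Sum.inl a, Sum.inr (i, b) => A12 i a b
    | Sum.inr (i, a), Sum.inl b => A12 i b a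
    | Sum.inr (i, a), Sum.inr (i', b) => if i = i' then A22 i a b else 0

section Aux

variable {p q m : ℕ}
    (A11 : Matrix (Fin p) (Fin p) ℝ)
    (A12 : Fin m → Matrix (Fin p) (Fin q) ℝ)
    (A22 : Fin m → Matrix (Fin q) (Fin q) ℝ)

/-- the off-diagonal block -/
def twoB : Matrix (Fin p) (Fin m × Fin q) ℝ :=
  Matrix.of fun a x => A12 x.1 a x.2

/-- the diagonal block -/
def twoD : Matrix (Fin m × Fin q) (Fin m × Fin q) ℝ :=
  Matrix.of fun x y => if x.1 = y.1 then A22 x.1 x.2 y.2 else 0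

theorem twoLevel_eq_fromBlocks :
    twoLevelSparse A11 A12 A22 =
      Matrix.fromBlocks A11 (twoB A12) (twoB A12)ᵀ (twoD A22) := by
  ext x y
  rcases x with a | ⟨i, a⟩ <;> rcases y with b | ⟨i', b⟩ <;>
    rfl

theorem twoD_mul (hA22 : ∀ i, IsUnit (A22 i).det) :
    twoD A22 * twoD (fun i => (A22 i)⁻¹) = 1 := by
  ext ⟨i, a⟩ ⟨j, b⟩
  simp only [twoD, Matrix.mul_apply, Matrix.of_apply, Fintype.sum_prod_type]
  rcases eq_or_ne i j with rfl | h
  · simp only [ite_mul, zero_mul, Finset.sum_ite_irrel]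
    rw [Finset.sum_eq_single i]
    · simp only [if_pos rfl]
      have := Matrix.mul_nonsing_inv (A22 i) (hA22 i)
      calc (∑ c, A22 i a c * (A22 i)⁻¹ c b) = (A22 i * (A22 i)⁻¹) a b := by
            rw [Matrix.mul_apply]
        _ = (1 : Matrix (Fin q) (Fin q) ℝ) a b := by rw [this]
        _ = ((1 : Matrix ((Fin m) × (Fin q)) ((Fin m) × (Fin q)) ℝ) (i, a) (i, b)) := by
            simp [Matrix.one_apply]
    · intro k _ hk
      simp [Ne.symm hk]
    · simp
  · simp only [ite_mul, zero_mul]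
    rw [Finset.sum_eq_zero]
    · simp [Matrix.one_apply, h]
    · intro k _
      rcases eq_or_ne i k with rfl | hk
      · simp [h]
      · simp [hk]

theorem twoB_mul_twoD_mul (M : Fin m → Matrix (Fin q) (Fin q) ℝ) :
    twoB A12 * twoD M * (twoB A12)ᵀ = ∑ i, A12 i * M i * (A12 i)ᵀ := by
  ext a b
  rw [Matrix.sum_apply]
  simp only [Matrix.mul_apply, twoB, twoD, Matrix.of_apply,
    Matrix.transpose_apply, Fintype.sum_prod_type, mul_ite, ite_mul, mul_zero, zero_mul,
    Finset.sum_ite_irrel, Finset.sum_ite_eq, Finset.sum_ite_eq', Finset.sum_const_zero, Finset.mem_univ, if_true]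

end Aux

theorem twoLevel_inverse_block11 {p q m : ℕ}
    (hp : 0 < p) (hq : 0 < q) (hm : 0 < m)
    (A11 : Matrix (Fin p) (Fin p) ℝ)
    (A12 : Fin m → Matrix (Fin p) (Fin q) ℝ)
    (A22 : Fin m → Matrix (Fin q) (Fin q) ℝ)
    (hA11sym : A11.IsSymm) (hA22sym : ∀ i, (A22 i).IsSymm)
    (hA : IsUnit (twoLevelSparse A11 A12 A22).det)
    (hA22 : ∀ i, IsUnit (A22 i).det) :
    IsUnit (A11 - ∑ i, A12 i * (A22 i)⁻¹ * (A12 i)ᵀ).det ∧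
      (twoLevelSparse A11 A12 A22)⁻¹.submatrix Sum.inl Sum.inl =
        (A11 - ∑ i, A12 i * (A22 i)⁻¹ * (A12 i)ᵀ)⁻¹ := by
  set B := twoB A12 with hB
  set D := twoD A22 with hD
  set D' := twoD (fun i => (A22 i)⁻¹) with hD'
  have hDD' : D * D' = 1 := twoD_mul A22 hA22
  have hD'D : D' * D = 1 := mul_eq_one_comm.mp hDD'
  letI iD : Invertible D := ⟨D', hD'D, hDD'⟩
  have hinvD : ⅟D = D' := rfl
  have hEq := twoLevel_eq_fromBlocks A11 A12 A22
  letI iA : Invertible (twoLevelSparse A11 A12 A22) := Matrix.invertibleOfIsUnitDet _ hA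
  letI iFB : Invertible (Matrix.fromBlocks A11 B Bᵀ D) := iA.copy _ hEq.symm
  letI iS : Invertible (A11 - B * ⅟D * Bᵀ) :=
    Matrix.invertibleOfFromBlocks₂₂Invertible A11 B Bᵀ D
  have hS : A11 - B * ⅟D * Bᵀ = A11 - ∑ i, A12 i * (A22 i)⁻¹ * (A12 i)ᵀ := by
    rw [hinvD, hB, hD', twoB_mul_twoD_mul]
  constructor
  · rw [← hS]
    exact Matrix.isUnit_det_of_invertible _
  · rw [hEq, ← Matrix.invOf_eq_nonsing_inv, Matrix.invOf_fromBlocks₂₂_eq]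
    have h1 : (Matrix.fromBlocks (⅟(A11 - B * ⅟D * Bᵀ))
        (-(⅟(A11 - B * ⅟D * Bᵀ) * B * ⅟D)) (-(⅟D * Bᵀ * ⅟(A11 - B * ⅟D * Bᵀ)))
        (⅟D + ⅟D * Bᵀ * ⅟(A11 - B * ⅟D * Bᵀ) * B * ⅟D)).submatrix Sum.inl Sum.inl =
        ⅟(A11 - B * ⅟D * Bᵀ) := rfl
    rw [h1, Matrix.invOf_eq_nonsing_inv, hS]
end

section
/- Let A be an invertible two-level sparse matrix built from blocks A₁₁, A₁₂,ᵢ, A₂₂,ᵢ (1 ≤ i ≤ m), and suppose each A₂₂,ᵢ is invertible. Then for each 1 ≤ i ≤ m, the sub-block A²²ᶦ of A⁻¹ satisfies A²²ᶦ = A₂₂,ᵢ⁻¹ (I − A₁₂,ᵢᵀ A¹²ᶦ), where I is the q×q identity matrix. -/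
open Matrix

theorem twoLevel_inverse_block22 {p q m : ℕ}
    (hp : 0 < p) (hq : 0 < q) (hm : 0 < m)
    (A11 : Matrix (Fin p) (Fin p) ℝ)
    (A12 : Fin m → Matrix (Fin p) (Fin q) ℝ)
    (A22 : Fin m → Matrix (Fin q) (Fin q) ℝ)
    (hA11sym : A11.IsSymm) (hA22sym : ∀ i, (A22 i).IsSymm)
    (hA : IsUnit (twoLevelSparse A11 A12 A22).det)
    (hA22 : ∀ i, IsUnit (A22 i).det) :
    ∀ i : Fin m,
      (twoLevelSparse A11 A12 A22)⁻¹.submatrix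
          (fun a => Sum.inr (i, a)) (fun b => Sum.inr (i, b)) =
        (A22 i)⁻¹ * (1 - (A12 i)ᵀ *
          (twoLevelSparse A11 A12 A22)⁻¹.submatrix Sum.inl (fun b => Sum.inr (i, b))) := by
  intro i
  set M := twoLevelSparse A11 A12 A22 with hM
  have hMul : M * M⁻¹ = 1 := mul_nonsing_inv _ hA
  have hkey : A22 i * M⁻¹.submatrix (fun a => Sum.inr (i, a)) (fun b => Sum.inr (i, b))
      = 1 - (A12 i)ᵀ * M⁻¹.submatrix Sum.inl (fun b => Sum.inr (i, b)) := by
    ext a b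
    have h := congrFun (congrFun hMul (Sum.inr (i, a))) (Sum.inr (i, b))
    simp [Matrix.mul_apply, Fintype.sum_sum_type, Fintype.sum_prod_type, twoLevelSparse,
      Matrix.one_apply, Prod.ext_iff, ite_mul, Finset.sum_ite_eq, hM] at h ⊢
    linarith [h]
  calc M⁻¹.submatrix (fun a => Sum.inr (i, a)) (fun b => Sum.inr (i, b))
      = (A22 i)⁻¹ * (A22 i * M⁻¹.submatrix (fun a => Sum.inr (i, a)) (fun b => Sum.inr (i, b))) := by
        rw [← mul_assoc, nonsing_inv_mul _ (hA22 i), one_mul]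
    _ = _ := by rw [hkey]
end

section
/- Let A be an invertible two-level sparse matrix built from blocks A₁₁, A₁₂,ᵢ, A₂₂,ᵢ (1 ≤ i ≤ m), and suppose each A₂₂,ᵢ is invertible. Then the sub-block A¹¹ of A⁻¹ is invertible and det A = det((A¹¹)⁻¹) · ∏_{i=1}^m det(A₂₂,ᵢ). -/
open Matrix

theorem twoLevel_det {p q m : ℕ}
    (hp : 0 < p) (hq : 0 < q) (hm : 0 < m)
    (A11 : Matrix (Fin p) (Fin p) ℝ)
    (A12 : Fin m → Matrix (Fin p) (Fin q) ℝ)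
    (A22 : Fin m → Matrix (Fin q) (Fin q) ℝ)
    (hA11sym : A11.IsSymm) (hA22sym : ∀ i, (A22 i).IsSymm)
    (hA : IsUnit (twoLevelSparse A11 A12 A22).det)
    (hA22 : ∀ i, IsUnit (A22 i).det) :
    IsUnit ((twoLevelSparse A11 A12 A22)⁻¹.submatrix Sum.inl Sum.inl).det ∧
      (twoLevelSparse A11 A12 A22).det =
        (((twoLevelSparse A11 A12 A22)⁻¹.submatrix Sum.inl Sum.inl)⁻¹).det *
          ∏ i, (A22 i).det := by
  set B : Matrix (Fin p) (Fin m × Fin q) ℝ := Matrix.of fun a x => A12 x.1 a x.2 with hB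
  set C : Matrix (Fin m × Fin q) (Fin p) ℝ := Matrix.of fun x b => A12 x.1 b x.2 with hC
  set D : Matrix (Fin m × Fin q) (Fin m × Fin q) ℝ :=
    Matrix.of fun x y => if x.1 = y.1 then A22 x.1 x.2 y.2 else 0 with hD
  have hblocks : twoLevelSparse A11 A12 A22 = fromBlocks A11 B C D := by
    ext x y
    cases x <;> cases y <;> rfl
  -- D is a reindexed block diagonal matrix
  have hDdet : D.det = ∏ i, (A22 i).det := by
    have : D = (Matrix.blockDiagonal A22).submatrix
        (Equiv.prodComm (Fin m) (Fin q)) (Equiv.prodComm (Fin m) (Fin q)) := by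
      ext ⟨i, a⟩ ⟨i', b⟩
      simp [hD, Matrix.blockDiagonal_apply]
    rw [this, Matrix.det_submatrix_equiv_self, Matrix.det_blockDiagonal]
  have hDunit : IsUnit D.det := by
    rw [hDdet]; exact Finset.prod_induction _ IsUnit (fun a b => IsUnit.mul) isUnit_one fun i _ => hA22 i
  haveI : Invertible D := D.invertibleOfIsUnitDet hDunit
  haveI : Invertible (fromBlocks A11 B C D) := by
    apply Matrix.invertibleOfIsUnitDet
    rw [← hblocks]; exact hA
  haveI hSinv : Invertible (A11 - B * ⅟ D * C) :=
    Matrix.invertibleOfFromBlocks₂₂Invertible A11 B C D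
  set S := A11 - B * ⅟ D * C with hS
  have hSdetUnit : IsUnit S.det := (Matrix.isUnit_iff_isUnit_det S).mp (isUnit_of_invertible S)
  -- the top-left block of the inverse
  have hsub : (twoLevelSparse A11 A12 A22)⁻¹.submatrix Sum.inl Sum.inl = S⁻¹ := by
    rw [hblocks, ← Matrix.invOf_eq_nonsing_inv, Matrix.invOf_fromBlocks₂₂_eq,
      ← Matrix.invOf_eq_nonsing_inv]
    rfl
  have hdetA : (twoLevelSparse A11 A12 A22).det = D.det * S.det := by
    rw [hblocks, Matrix.det_fromBlocks₂₂]
  refine ⟨?_, ?_⟩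
  · rw [hsub]
    exact S.isUnit_nonsing_inv_det hSdetUnit
  · rw [hsub, S.nonsing_inv_nonsing_inv hSdetUnit, hdetA, hDdet, mul_comm]
end

section
/- Let A be an invertible two-level sparse matrix built from blocks A₁₁, A₁₂,ᵢ, A₂₂,ᵢ (1 ≤ i ≤ m), suppose each A₂₂,ᵢ is invertible, and let x, a be vectors in ℝ^{p+mq} with A x = a, partitioned into a p-block x₁ (resp. a₁) and q-blocks x₂,ᵢ (resp. a₂,ᵢ) for 1 ≤ i ≤ m. Then x₁ = A¹¹ (a₁ − Σ_{i=1}^m A₁₂,ᵢ A₂₂,ᵢ⁻¹ a₂,ᵢ) and x₂,ᵢ = A₂₂,ᵢ⁻¹ (a₂,ᵢ − A₁₂,ᵢᵀ x₁) for all 1 ≤ i ≤ m. -/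
open Matrix

/-!
The two-level sparse matrix is the `2 × 2` block matrix `[[A₁₁, C], [Cᵀ, D]]`, where
`C = [A₁₂,₁ ⋯ A₁₂,ₘ]` and `D = diag(A₂₂,ᵢ)`. For a block system `[[A, B], [C, D]] x = a` with
`D` invertible, the second block row gives `x₂ = D⁻¹ (a₂ - C x₁)` directly. For the first, write
`a = (a₁ - B D⁻¹ a₂, 0) + M (0, D⁻¹ a₂)`; applying `M⁻¹`, the second summand only contributes to
the second block, so `x₁ = (M⁻¹)₁₁ (a₁ - B D⁻¹ a₂)`. Since `D⁻¹` is block diagonal,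
`C D⁻¹ a₂ = ∑ᵢ A₁₂,ᵢ A₂₂,ᵢ⁻¹ a₂,ᵢ`.
-/

namespace Matrix

section BlockSystems

variable {R l n : Type*} [CommRing R] [Fintype l] [Fintype n] [DecidableEq n]
  {A : Matrix l l R} {B : Matrix l n R} {C : Matrix n l R} {D E : Matrix n n R}
  {x a : l ⊕ n → R}

theorem comp_inr_eq_of_fromBlocks_mulVec_eq (hED : E * D = 1)
    (h : fromBlocks A B C D *ᵥ x = a) :
    x ∘ Sum.inr = E *ᵥ (a ∘ Sum.inr - C *ᵥ (x ∘ Sum.inl)) := by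
  have hrow : C *ᵥ (x ∘ Sum.inl) + D *ᵥ (x ∘ Sum.inr) = a ∘ Sum.inr := by
    rw [← h, ← Sum.elim_comp_inl_inr x, fromBlocks_mulVec]
    rfl
  rw [← hrow, add_sub_cancel_left, mulVec_mulVec, hED, one_mulVec]

theorem comp_inl_eq_of_fromBlocks_mulVec_eq [DecidableEq l]
    (hM : IsUnit (fromBlocks A B C D).det) (hDE : D * E = 1)
    (h : fromBlocks A B C D *ᵥ x = a) :
    x ∘ Sum.inl =
      (fromBlocks A B C D)⁻¹.toBlocks₁₁ *ᵥ (a ∘ Sum.inl - B *ᵥ E *ᵥ (a ∘ Sum.inr)) := by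
  set M := fromBlocks A B C D
  set b := a ∘ Sum.inl - B *ᵥ E *ᵥ (a ∘ Sum.inr)
  have hsplit : a = Sum.elim b 0 + M *ᵥ Sum.elim 0 (E *ᵥ (a ∘ Sum.inr)) := by
    ext (i | j) <;> simp [M, b, fromBlocks_mulVec, mulVec_mulVec, hDE]
  have hx : x = M⁻¹ *ᵥ a := by
    rw [← h, mulVec_mulVec, nonsing_inv_mul _ hM, one_mulVec]
  rw [hx, hsplit, mulVec_add, mulVec_mulVec, nonsing_inv_mul _ hM, one_mulVec,
    ← fromBlocks_toBlocks M⁻¹, fromBlocks_mulVec]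
  ext i
  simp

end BlockSystems

section FamilyBlocks

variable {R l n o : Type*}

def fromColBlocks (M : o → Matrix l n R) : Matrix l (o × n) R :=
  of fun a ib => M ib.1 a ib.2

theorem fromColBlocks_mulVec [Fintype n] [Fintype o] [NonUnitalNonAssocSemiring R]
    (M : o → Matrix l n R) (v : o × n → R) :
    fromColBlocks M *ᵥ v = ∑ i, M i *ᵥ fun b => v (i, b) := by
  ext a
  simp [fromColBlocks, mulVec, dotProduct, Fintype.sum_prod_type, Finset.sum_apply]

/-- `blockDiagonal` with the block index as the first coordinate, as in `twoLevelSparse`. -/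
def blockDiagonalLeft [DecidableEq o] [Zero R] (M : o → Matrix n n R) :
    Matrix (o × n) (o × n) R :=
  (blockDiagonal M).submatrix Prod.swap Prod.swap

theorem blockDiagonalLeft_apply [DecidableEq o] [Zero R] (M : o → Matrix n n R)
    (i j : o) (a b : n) :
    blockDiagonalLeft M (i, a) (j, b) = if i = j then M i a b else 0 :=
  blockDiagonal_apply M (a, i) (b, j)

theorem blockDiagonalLeft_mul [Fintype n] [Fintype o] [DecidableEq o]
    [NonUnitalNonAssocSemiring R] (M N : o → Matrix n n R) :
    blockDiagonalLeft M * blockDiagonalLeft N = blockDiagonalLeft fun i => M i * N i := by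
  rw [blockDiagonalLeft, blockDiagonalLeft, blockDiagonalLeft, blockDiagonal_mul]
  exact submatrix_mul_equiv _ _ _ (Equiv.prodComm o n) _

theorem blockDiagonalLeft_one [DecidableEq o] [DecidableEq n] [Zero R] [One R] :
    blockDiagonalLeft (1 : o → Matrix n n R) = 1 := by
  rw [blockDiagonalLeft, blockDiagonal_one]
  exact submatrix_one_equiv (Equiv.prodComm o n)

theorem blockDiagonalLeft_mulVec_apply [Fintype n] [Fintype o] [DecidableEq o]
    [NonUnitalNonAssocSemiring R] (M : o → Matrix n n R) (v : o × n → R) (i : o) (a : n) :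
    (blockDiagonalLeft M *ᵥ v) (i, a) = (M i *ᵥ fun b => v (i, b)) a := by
  simp [mulVec, dotProduct, Fintype.sum_prod_type, blockDiagonalLeft_apply]

end FamilyBlocks

end Matrix

theorem twoLevelSparse_eq_fromBlocks {p q m : ℕ} (A11 : Matrix (Fin p) (Fin p) ℝ)
    (A12 : Fin m → Matrix (Fin p) (Fin q) ℝ) (A22 : Fin m → Matrix (Fin q) (Fin q) ℝ) :
    twoLevelSparse A11 A12 A22 =
      fromBlocks A11 (fromColBlocks A12) (fromColBlocks A12)ᵀ (blockDiagonalLeft A22) := by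
  ext (a | ⟨i, a⟩) (b | ⟨j, b⟩) <;>
    simp [twoLevelSparse, fromColBlocks, blockDiagonalLeft_apply]

theorem twoLevel_linear_system_general {p q m : ℕ}
    (A11 : Matrix (Fin p) (Fin p) ℝ)
    (A12 : Fin m → Matrix (Fin p) (Fin q) ℝ)
    (A22 : Fin m → Matrix (Fin q) (Fin q) ℝ)
    (hA : IsUnit (twoLevelSparse A11 A12 A22).det)
    (hA22 : ∀ i, IsUnit (A22 i).det)
    (x a : (Fin p ⊕ Fin m × Fin q) → ℝ)
    (hxa : (twoLevelSparse A11 A12 A22).mulVec x = a) :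
    (x ∘ Sum.inl) =
      ((twoLevelSparse A11 A12 A22)⁻¹.submatrix Sum.inl Sum.inl).mulVec
        ((a ∘ Sum.inl) -
          ∑ i, (A12 i * (A22 i)⁻¹).mulVec (fun b => a (Sum.inr (i, b)))) ∧
    ∀ i : Fin m,
      (fun b => x (Sum.inr (i, b))) =
        ((A22 i)⁻¹).mulVec
          ((fun b => a (Sum.inr (i, b))) - (A12 i)ᵀ.mulVec (x ∘ Sum.inl)) := by
  rw [twoLevelSparse_eq_fromBlocks] at hA hxa ⊢
  set E := blockDiagonalLeft fun i => (A22 i)⁻¹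
  have hDE : blockDiagonalLeft A22 * E = 1 := by
    rw [blockDiagonalLeft_mul, ← blockDiagonalLeft_one]
    exact congrArg _ (funext fun i => mul_nonsing_inv _ (hA22 i))
  refine ⟨?_, fun i => ?_⟩
  · rw [comp_inl_eq_of_fromBlocks_mulVec_eq hA hDE hxa, fromColBlocks_mulVec]
    simp only [← mulVec_mulVec, E, blockDiagonalLeft_mulVec_apply]
    rfl
  · ext b
    have hx₂ := congrFun (comp_inr_eq_of_fromBlocks_mulVec_eq (mul_eq_one_comm.mp hDE) hxa) (i, b)
    simp only [E, blockDiagonalLeft_mulVec_apply] at hx₂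
    exact hx₂

theorem twoLevel_linear_system {p q m : ℕ}
    (hp : 0 < p) (hq : 0 < q) (hm : 0 < m)
    (A11 : Matrix (Fin p) (Fin p) ℝ)
    (A12 : Fin m → Matrix (Fin p) (Fin q) ℝ)
    (A22 : Fin m → Matrix (Fin q) (Fin q) ℝ)
    (hA11sym : A11.IsSymm) (hA22sym : ∀ i, (A22 i).IsSymm)
    (hA : IsUnit (twoLevelSparse A11 A12 A22).det)
    (hA22 : ∀ i, IsUnit (A22 i).det)
    (x a : (Fin p ⊕ Fin m × Fin q) → ℝ)
    (hxa : (twoLevelSparse A11 A12 A22).mulVec x = a) :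
    (x ∘ Sum.inl) =
      ((twoLevelSparse A11 A12 A22)⁻¹.submatrix Sum.inl Sum.inl).mulVec
        ((a ∘ Sum.inl) -
          ∑ i, (A12 i * (A22 i)⁻¹).mulVec (fun b => a (Sum.inr (i, b)))) ∧
    ∀ i : Fin m,
      (fun b => x (Sum.inr (i, b))) =
        ((A22 i)⁻¹).mulVec
          ((fun b => a (Sum.inr (i, b))) - (A12 i)ᵀ.mulVec (x ∘ Sum.inl)) :=
  twoLevel_linear_system_general A11 A12 A22 hA hA22 x a hxa
end

section
/- In the two-level least squares setting with the given QR decompositions, the matrix A = BᵀB is invertible and the p×p sub-block A¹¹ of A⁻¹ satisfies A¹¹ = R⁻¹ R⁻ᵀ. -/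
/-! Orthogonality of the `Qᵢ` and of `Q` turns `A = BᵀB` into `TᵀT` for the block
lower-triangular `T = [[R, 0], [C₁, diag Rᵢ]]`, where `C₁` stacks the `C₁ᵢ`: this `T`
is the triangular factor of a QR decomposition of `B`. Hence `A⁻¹ = T⁻¹T⁻ᵀ`, and since
the first block row of `T⁻¹` is `[R⁻¹, 0]`, the top-left block of `A⁻¹` is `R⁻¹R⁻ᵀ`. -/

open Matrix

/-- The two-level least-squares design matrix with row blocks
`[Bᵢ | 0 … B̊ᵢ … 0]`; the rows of block `i` are indexed by `Fin q ⊕ Fin (k i)`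
(so that `nᵢ = q + k i ≥ q`). -/
def twoLevelB {p q m : ℕ} {k : Fin m → ℕ}
    (B1 : (i : Fin m) → Matrix (Fin q ⊕ Fin (k i)) (Fin p) ℝ)
    (B2 : (i : Fin m) → Matrix (Fin q ⊕ Fin (k i)) (Fin q) ℝ) :
    Matrix ((i : Fin m) × (Fin q ⊕ Fin (k i))) (Fin p ⊕ Fin m × Fin q) ℝ :=
  Matrix.of fun x y =>
    match y with
    | Sum.inl a => B1 x.1 x.2 a
    | Sum.inr (i, b) => if x.1 = i then B2 x.1 x.2 b else 0

/-- `C₀ᵢ := Qᵢᵀ Bᵢ`. -/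
def C0 {p q m : ℕ} {k : Fin m → ℕ}
    (Q1 : (i : Fin m) → Matrix (Fin q ⊕ Fin (k i)) (Fin q ⊕ Fin (k i)) ℝ)
    (B1 : (i : Fin m) → Matrix (Fin q ⊕ Fin (k i)) (Fin p) ℝ)
    (i : Fin m) : Matrix (Fin q ⊕ Fin (k i)) (Fin p) ℝ :=
  (Q1 i)ᵀ * B1 i

/-- `C₁ᵢ`: the first `q` rows of `C₀ᵢ`. -/
def C1 {p q m : ℕ} {k : Fin m → ℕ}
    (Q1 : (i : Fin m) → Matrix (Fin q ⊕ Fin (k i)) (Fin q ⊕ Fin (k i)) ℝ)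
    (B1 : (i : Fin m) → Matrix (Fin q ⊕ Fin (k i)) (Fin p) ℝ)
    (i : Fin m) : Matrix (Fin q) (Fin p) ℝ :=
  (C0 Q1 B1 i).submatrix Sum.inl id

/-- `C₂ᵢ`: the remaining `nᵢ − q` rows of `C₀ᵢ`. -/
def C2 {p q m : ℕ} {k : Fin m → ℕ}
    (Q1 : (i : Fin m) → Matrix (Fin q ⊕ Fin (k i)) (Fin q ⊕ Fin (k i)) ℝ)
    (B1 : (i : Fin m) → Matrix (Fin q ⊕ Fin (k i)) (Fin p) ℝ)
    (i : Fin m) : Matrix (Fin (k i)) (Fin p) ℝ :=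
  (C0 Q1 B1 i).submatrix Sum.inr id

/-- The row-stack of `C₂₁, …, C₂ₘ`. -/
def stackC2 {p q m : ℕ} {k : Fin m → ℕ}
    (Q1 : (i : Fin m) → Matrix (Fin q ⊕ Fin (k i)) (Fin q ⊕ Fin (k i)) ℝ)
    (B1 : (i : Fin m) → Matrix (Fin q ⊕ Fin (k i)) (Fin p) ℝ) :
    Matrix ((i : Fin m) × Fin (k i)) (Fin p) ℝ :=
  Matrix.of fun x a => C2 Q1 B1 x.1 x.2 a


namespace Matrix

variable {ι l m n n' o o' o'' α K : Type*}

def stackBlocks (C : ι → Matrix o n α) : Matrix (ι × o) n α :=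
  of fun ib a => C ib.1 ib.2 a

/-- `Matrix.blockDiagonal` with the block index as the first component of the row and column
indices, as in the columns `Fin m × Fin q` of `twoLevelB`. -/
def diagBlocks [DecidableEq ι] [Zero α] (S : ι → Matrix o o' α) :
    Matrix (ι × o) (ι × o') α :=
  (blockDiagonal S).submatrix Prod.swap Prod.swap

theorem diagBlocks_apply [DecidableEq ι] [Zero α] (S : ι → Matrix o o' α) (ib : ι × o)
    (jc : ι × o') : diagBlocks S ib jc = if ib.1 = jc.1 then S ib.1 ib.2 jc.2 else 0 := by
  simp [diagBlocks, blockDiagonal_apply]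

theorem diagBlocks_transpose [DecidableEq ι] [Zero α] (S : ι → Matrix o o' α) :
    (diagBlocks S)ᵀ = diagBlocks fun i => (S i)ᵀ := by
  simp [diagBlocks, transpose_submatrix, blockDiagonal_transpose]

theorem diagBlocks_mul [Fintype ι] [DecidableEq ι] [Fintype o'] [NonUnitalNonAssocSemiring α]
    (S : ι → Matrix o o' α) (S' : ι → Matrix o' o'' α) :
    diagBlocks S * diagBlocks S' = diagBlocks fun i => S i * S' i := by
  rw [diagBlocks, diagBlocks, diagBlocks, blockDiagonal_mul]
  exact submatrix_mul_equiv _ _ _ (Equiv.prodComm ι o') _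

theorem det_diagBlocks [Fintype ι] [DecidableEq ι] [Fintype o] [DecidableEq o] [CommRing α]
    (S : ι → Matrix o o α) : (diagBlocks S).det = ∏ i, (S i).det := by
  rw [diagBlocks, ← det_blockDiagonal]
  exact det_submatrix_equiv_self (Equiv.prodComm ι o) _

theorem diagBlocks_mul_stackBlocks [Fintype ι] [DecidableEq ι] [Fintype o']
    [NonUnitalNonAssocSemiring α] (S : ι → Matrix o o' α) (C : ι → Matrix o' n α) :
    diagBlocks S * stackBlocks C = stackBlocks fun i => S i * C i := by
  ext ⟨i, b⟩ a
  simp [mul_apply, diagBlocks_apply, stackBlocks, Fintype.sum_prod_type, ite_mul]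

theorem stackBlocks_transpose_mul_stackBlocks [Fintype ι] [Fintype o]
    [NonUnitalNonAssocSemiring α] (C : ι → Matrix o n α) (C' : ι → Matrix o n' α) :
    (stackBlocks C)ᵀ * stackBlocks C' = ∑ i, (C i)ᵀ * C' i := by
  ext a a'
  simp [mul_apply, sum_apply, stackBlocks, Fintype.sum_prod_type]

theorem transpose_mul_eq_sum_sigma [Fintype ι] {κ : ι → Type*} [∀ i, Fintype (κ i)]
    [NonUnitalNonAssocSemiring α] (M : Matrix ((i : ι) × κ i) n α)
    (N : Matrix ((i : ι) × κ i) o α) :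
    Mᵀ * N = ∑ i, (M.submatrix (Sigma.mk i) id)ᵀ * N.submatrix (Sigma.mk i) id := by
  ext a c
  simp [mul_apply, sum_apply, Fintype.sum_sigma]

/- The type of `0` is given because otherwise `Q * fromRows R 0` elaborates through
`CStarMatrix` multiplication. -/
theorem transpose_mul_self_mul_fromRows_zero [Fintype l] [Fintype m] [Fintype n]
    [DecidableEq m] [DecidableEq n] [CommRing K] {Q : Matrix l (m ⊕ n) K} (hQ : Qᵀ * Q = 1)
    (R : Matrix m o K) :
    (Q * fromRows R (0 : Matrix n o K))ᵀ * (Q * fromRows R (0 : Matrix n o K)) = Rᵀ * R := by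
  rw [transpose_mul, Matrix.mul_assoc, ← Matrix.mul_assoc Qᵀ, hQ, Matrix.one_mul,
    transpose_fromRows, fromCols_mul_fromRows, transpose_zero, Matrix.zero_mul, add_zero]

section LowerBlockTriangular

variable [Fintype m] [DecidableEq m] [Fintype n] [DecidableEq n] [Field K]
  {R : Matrix m m K} {C : Matrix n m K} {S : Matrix n n K}

theorem isUnit_det_transpose_mul_self_fromBlocks_zero₁₂ (hR : IsUnit R.det)
    (hS : IsUnit S.det) : IsUnit ((fromBlocks R 0 C S)ᵀ * fromBlocks R 0 C S).det := by
  rw [det_mul, det_transpose, det_fromBlocks_zero₁₂]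
  exact (hR.mul hS).mul (hR.mul hS)

theorem toBlocks₁₁_inv_transpose_mul_self_fromBlocks_zero₁₂ (hR : IsUnit R.det)
    (hS : IsUnit S.det) :
    ((fromBlocks R 0 C S)ᵀ * fromBlocks R 0 C S)⁻¹.toBlocks₁₁ = R⁻¹ * Rᵀ⁻¹ := by
  have hRS : IsUnit R ↔ IsUnit S := by
    simp only [isUnit_iff_isUnit_det, hR, hS]
  rw [mul_inv_rev, ← transpose_nonsing_inv, inv_fromBlocks_zero₁₂_of_isUnit_iff _ _ _ hRS,
    fromBlocks_transpose, fromBlocks_multiply, toBlocks_fromBlocks₁₁, transpose_nonsing_inv]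
  simp

end LowerBlockTriangular

end Matrix

section TwoLevel

variable {p q m s : ℕ} {k : Fin m → ℕ}
  (B1 : (i : Fin m) → Matrix (Fin q ⊕ Fin (k i)) (Fin p) ℝ)
  (B2 : (i : Fin m) → Matrix (Fin q ⊕ Fin (k i)) (Fin q) ℝ)
  (Q1 : (i : Fin m) → Matrix (Fin q ⊕ Fin (k i)) (Fin q ⊕ Fin (k i)) ℝ)

theorem twoLevelB_toCols₁_gram :
    (twoLevelB B1 B2).toCols₁ᵀ * (twoLevelB B1 B2).toCols₁ = ∑ i, (B1 i)ᵀ * B1 i :=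
  transpose_mul_eq_sum_sigma _ _

theorem twoLevelB_toCols₂_transpose_mul_toCols₁ :
    (twoLevelB B1 B2).toCols₂ᵀ * (twoLevelB B1 B2).toCols₁ =
      stackBlocks fun i => (B2 i)ᵀ * B1 i := by
  ext ⟨i, b⟩ a
  simp [mul_apply, twoLevelB, stackBlocks, Fintype.sum_sigma, ite_mul]

theorem twoLevelB_toCols₂_gram :
    (twoLevelB B1 B2).toCols₂ᵀ * (twoLevelB B1 B2).toCols₂ =
      diagBlocks fun i => (B2 i)ᵀ * B2 i := by
  ext ⟨i, b⟩ ⟨j, c⟩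
  rcases eq_or_ne i j with rfl | hij
  · simp [mul_apply, twoLevelB, diagBlocks_apply, Fintype.sum_sigma, ite_mul, mul_ite]
  · simp [mul_apply, twoLevelB, diagBlocks_apply, Fintype.sum_sigma, ite_mul, mul_ite, hij,
      hij.symm]

theorem twoLevelB_gram_eq_fromBlocks :
    (twoLevelB B1 B2)ᵀ * twoLevelB B1 B2 =
      fromBlocks (∑ i, (B1 i)ᵀ * B1 i) (stackBlocks fun i => (B2 i)ᵀ * B1 i)ᵀ
        (stackBlocks fun i => (B2 i)ᵀ * B1 i) (diagBlocks fun i => (B2 i)ᵀ * B2 i) := by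
  conv_lhs => rw [← fromCols_toCols (twoLevelB B1 B2)]
  rw [transpose_fromCols, fromRows_mul_fromCols, twoLevelB_toCols₁_gram,
    twoLevelB_toCols₂_transpose_mul_toCols₁, twoLevelB_toCols₂_gram,
    ← twoLevelB_toCols₂_transpose_mul_toCols₁, transpose_mul, transpose_transpose]

theorem fromRows_C1_C2 (i : Fin m) : fromRows (C1 Q1 B1 i) (C2 Q1 B1 i) = C0 Q1 B1 i :=
  fromRows_toRows _

theorem gram_eq_C1_gram_add_C2_gram (hQ1' : ∀ i, Q1 i * (Q1 i)ᵀ = 1) (i : Fin m) :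
    (B1 i)ᵀ * B1 i = (C1 Q1 B1 i)ᵀ * C1 Q1 B1 i + (C2 Q1 B1 i)ᵀ * C2 Q1 B1 i := by
  rw [← fromCols_mul_fromRows, ← transpose_fromRows, fromRows_C1_C2, C0, transpose_mul,
    transpose_transpose, Matrix.mul_assoc, ← Matrix.mul_assoc (Q1 i), hQ1', Matrix.one_mul]

theorem transpose_mul_eq_transpose_mul_C1 (i : Fin m) {R1 : Matrix (Fin q) (Fin q) ℝ}
    {B2 : Matrix (Fin q ⊕ Fin (k i)) (Fin q) ℝ}
    (hQR1 : B2 = Q1 i * fromRows R1 (0 : Matrix (Fin (k i)) (Fin q) ℝ)) :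
    B2ᵀ * B1 i = R1ᵀ * C1 Q1 B1 i := by
  rw [hQR1, transpose_mul, Matrix.mul_assoc, ← C0, ← fromRows_C1_C2, transpose_fromRows,
    fromCols_mul_fromRows, transpose_zero, Matrix.zero_mul, add_zero]

theorem sum_C2_gram {Q : Matrix ((i : Fin m) × Fin (k i)) (Fin p ⊕ Fin s) ℝ} (hQ : Qᵀ * Q = 1)
    {R : Matrix (Fin p) (Fin p) ℝ}
    (hQR : stackC2 Q1 B1 = Q * fromRows R (0 : Matrix (Fin s) (Fin p) ℝ)) :
    ∑ i, (C2 Q1 B1 i)ᵀ * C2 Q1 B1 i = Rᵀ * R := by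
  rw [← transpose_mul_self_mul_fromRows_zero hQ R, ← hQR, transpose_mul_eq_sum_sigma]
  rfl

variable {B1 B2 Q1}

theorem twoLevelB_gram_eq_of_QR (hQ1 : ∀ i, (Q1 i)ᵀ * Q1 i = 1)
    (hQ1' : ∀ i, Q1 i * (Q1 i)ᵀ = 1) {R1 : (i : Fin m) → Matrix (Fin q) (Fin q) ℝ}
    (hQR1 : ∀ i, B2 i = Q1 i * fromRows (R1 i) (0 : Matrix (Fin (k i)) (Fin q) ℝ))
    {Q : Matrix ((i : Fin m) × Fin (k i)) (Fin p ⊕ Fin s) ℝ} (hQ : Qᵀ * Q = 1)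
    {R : Matrix (Fin p) (Fin p) ℝ}
    (hQR : stackC2 Q1 B1 = Q * fromRows R (0 : Matrix (Fin s) (Fin p) ℝ)) :
    (twoLevelB B1 B2)ᵀ * twoLevelB B1 B2 =
      (fromBlocks R 0 (stackBlocks (C1 Q1 B1)) (diagBlocks R1))ᵀ *
        fromBlocks R 0 (stackBlocks (C1 Q1 B1)) (diagBlocks R1) := by
  have h11 : ∑ i, (B1 i)ᵀ * B1 i =
      Rᵀ * R + (stackBlocks (C1 Q1 B1))ᵀ * stackBlocks (C1 Q1 B1) := by
    simp_rw [gram_eq_C1_gram_add_C2_gram B1 Q1 hQ1']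
    rw [Finset.sum_add_distrib, sum_C2_gram B1 Q1 hQ hQR,
      stackBlocks_transpose_mul_stackBlocks, add_comm]
  have h21 : (stackBlocks fun i => (B2 i)ᵀ * B1 i) =
      (diagBlocks R1)ᵀ * stackBlocks (C1 Q1 B1) := by
    rw [diagBlocks_transpose, diagBlocks_mul_stackBlocks]
    exact congrArg stackBlocks
      (funext fun i => transpose_mul_eq_transpose_mul_C1 B1 Q1 i (hQR1 i))
  have h22 : (diagBlocks fun i => (B2 i)ᵀ * B2 i) = (diagBlocks R1)ᵀ * diagBlocks R1 := by
    rw [diagBlocks_transpose, diagBlocks_mul]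
    exact congrArg diagBlocks (funext fun i => by
      rw [hQR1 i]; exact transpose_mul_self_mul_fromRows_zero (hQ1 i) (R1 i))
  rw [twoLevelB_gram_eq_fromBlocks, h11, h21, h22, fromBlocks_transpose, fromBlocks_multiply]
  simp [transpose_mul]

end TwoLevel

theorem twoLevelLS_inverse_block11_general {p q m s : ℕ} {k : Fin m → ℕ}
    (B1 : (i : Fin m) → Matrix (Fin q ⊕ Fin (k i)) (Fin p) ℝ)
    (B2 : (i : Fin m) → Matrix (Fin q ⊕ Fin (k i)) (Fin q) ℝ)
    (Q1 : (i : Fin m) → Matrix (Fin q ⊕ Fin (k i)) (Fin q ⊕ Fin (k i)) ℝ)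
    (hQ1 : ∀ i, (Q1 i)ᵀ * Q1 i = 1) (hQ1' : ∀ i, Q1 i * (Q1 i)ᵀ = 1)
    (R1 : (i : Fin m) → Matrix (Fin q) (Fin q) ℝ)
    (hR1 : ∀ i, IsUnit (R1 i).det)
    (hQR1 : ∀ i, B2 i = Q1 i * Matrix.fromRows (R1 i) 0)
    (Q : Matrix ((i : Fin m) × Fin (k i)) (Fin p ⊕ Fin s) ℝ)
    (hQ : Qᵀ * Q = 1)
    (R : Matrix (Fin p) (Fin p) ℝ)
    (hR : IsUnit R.det)
    (hQR : stackC2 Q1 B1 = Q * Matrix.fromRows R 0) :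
    IsUnit ((twoLevelB B1 B2)ᵀ * twoLevelB B1 B2).det ∧
      (((twoLevelB B1 B2)ᵀ * twoLevelB B1 B2)⁻¹).submatrix Sum.inl Sum.inl =
        R⁻¹ * (Rᵀ)⁻¹ := by
  have hS : IsUnit (diagBlocks R1).det := by
    rw [det_diagBlocks]
    exact IsUnit.prod_univ_iff.mpr hR1
  rw [twoLevelB_gram_eq_of_QR hQ1 hQ1' hQR1 hQ hQR]
  exact ⟨isUnit_det_transpose_mul_self_fromBlocks_zero₁₂ hR hS,
    toBlocks₁₁_inv_transpose_mul_self_fromBlocks_zero₁₂ hR hS⟩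

theorem twoLevelLS_inverse_block11 {p q m s : ℕ} {k : Fin m → ℕ}
    (hp : 0 < p) (hq : 0 < q) (hm : 0 < m)
    (B1 : (i : Fin m) → Matrix (Fin q ⊕ Fin (k i)) (Fin p) ℝ)
    (B2 : (i : Fin m) → Matrix (Fin q ⊕ Fin (k i)) (Fin q) ℝ)
    (hrank : (twoLevelB B1 B2).rank = p + m * q)
    (Q1 : (i : Fin m) → Matrix (Fin q ⊕ Fin (k i)) (Fin q ⊕ Fin (k i)) ℝ)
    (hQ1 : ∀ i, (Q1 i)ᵀ * Q1 i = 1) (hQ1' : ∀ i, Q1 i * (Q1 i)ᵀ = 1)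
    (R1 : (i : Fin m) → Matrix (Fin q) (Fin q) ℝ)
    (hR1tri : ∀ i, (R1 i).BlockTriangular id)
    (hR1 : ∀ i, IsUnit (R1 i).det)
    (hQR1 : ∀ i, B2 i = Q1 i * Matrix.fromRows (R1 i) 0)
    (Q : Matrix ((i : Fin m) × Fin (k i)) (Fin p ⊕ Fin s) ℝ)
    (hQ : Qᵀ * Q = 1) (hQ' : Q * Qᵀ = 1)
    (R : Matrix (Fin p) (Fin p) ℝ)
    (hRtri : R.BlockTriangular id) (hR : IsUnit R.det)
    (hQR : stackC2 Q1 B1 = Q * Matrix.fromRows R 0) :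
    IsUnit ((twoLevelB B1 B2)ᵀ * twoLevelB B1 B2).det ∧
      (((twoLevelB B1 B2)ᵀ * twoLevelB B1 B2)⁻¹).submatrix Sum.inl Sum.inl =
        R⁻¹ * (Rᵀ)⁻¹ :=
  twoLevelLS_inverse_block11_general B1 B2 Q1 hQ1 hQ1' R1 hR1 hQR1 Q hQ R hR hQR
end

section
/- In the two-level least squares setting with the given QR decompositions, for each 1 ≤ i ≤ m the sub-blocks of A⁻¹ satisfy A¹²ᶦ = −A¹¹ (Rᵢ⁻¹ C₁ᵢ)ᵀ and A²²ᶦ = Rᵢ⁻¹ (Rᵢ⁻ᵀ − C₁ᵢ A¹²ᶦ). -/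
open Matrix

/-! With `A = BᵀB`, the lower-right corner of `A` is block diagonal with blocks
`B̊ᵢᵀB̊ᵢ = RᵢᵀRᵢ`, and `A₁₂,ᵢ = BᵢᵀB̊ᵢ = (QᵢᵀBᵢ)ᵀ [Rᵢ; 0] = C₁ᵢᵀRᵢ`.
So the `(1, i)` block of `A⁻¹A = I` reads `A¹¹C₁ᵢᵀRᵢ + A¹²ᶦRᵢᵀRᵢ = 0`, and the `(i, i)` block
of `AA⁻¹ = I` reads `RᵢᵀC₁ᵢA¹²ᶦ + RᵢᵀRᵢA²²ᶦ = I`; solving these two equations with `Rᵢ`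
invertible gives the formulas. `A` is invertible because `B` has full column rank. -/

namespace Matrix

lemma isUnit_det_of_rank_eq_card {n K : Type*} [Fintype n] [DecidableEq n] [Field K]
    {A : Matrix n n K} (h : A.rank = Fintype.card n) : IsUnit A.det := by
  rw [← isUnit_iff_isUnit_det, ← linearIndependent_rows_iff_isUnit,
    linearIndependent_iff_card_eq_finrank_span, Set.finrank, ← rank_eq_finrank_span_row, h]

section BlockDiagonalCorner

variable {α ι β γ ρ S : Type*} [Fintype α] [Fintype ι] [Fintype β] [DecidableEq ι]
  [NonUnitalNonAssocSemiring S] {M : Matrix (α ⊕ ι × β) (α ⊕ ι × β) S} {D : ι → Matrix β β S}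

lemma submatrix_mul_inr_of_blockDiagonal_corner
    (hM : ∀ j i a b, M (.inr (j, a)) (.inr (i, b)) = if j = i then D i a b else 0)
    (N : Matrix ρ (α ⊕ ι × β) S) (r : γ → ρ) (i : ι) :
    (N * M).submatrix r (fun b => .inr (i, b)) =
      N.submatrix r .inl * M.submatrix .inl (fun b => .inr (i, b)) +
        N.submatrix r (fun b => .inr (i, b)) * D i := by
  ext x b
  simp [mul_apply, Fintype.sum_sum_type, Fintype.sum_prod_type, hM]

lemma submatrix_inr_mul_of_blockDiagonal_corner
    (hM : ∀ j i a b, M (.inr (j, a)) (.inr (i, b)) = if j = i then D i a b else 0)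
    (N : Matrix (α ⊕ ι × β) ρ S) (c : γ → ρ) (i : ι) :
    (M * N).submatrix (fun a => .inr (i, a)) c =
      M.submatrix (fun a => .inr (i, a)) .inl * N.submatrix .inl c +
        D i * N.submatrix (fun a => .inr (i, a)) c := by
  ext a x
  simp [mul_apply, Fintype.sum_sum_type, Fintype.sum_prod_type, hM]

end BlockDiagonalCorner

section BlockElimination

variable {n p K : Type*} [Fintype n] [DecidableEq n] [Fintype p] [CommRing K]
  {R : Matrix n n K} {C : Matrix n p K}

lemma eq_neg_mul_transpose_inv_mul_of_mul_add_mul_eq_zero (hR : IsUnit R.det)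
    {X₁₁ : Matrix p p K} {X₁₂ : Matrix p n K} (h : X₁₁ * (Cᵀ * R) + X₁₂ * (Rᵀ * R) = 0) :
    X₁₂ = -X₁₁ * (R⁻¹ * C)ᵀ := by
  have hRt : IsUnit Rᵀ.det := by rwa [det_transpose]
  calc X₁₂ = X₁₂ * (Rᵀ * R) * (R⁻¹ * Rᵀ⁻¹) := by
        rw [Matrix.mul_assoc, Matrix.mul_assoc, mul_nonsing_inv_cancel_left _ _ hR,
          mul_nonsing_inv _ hRt, Matrix.mul_one]
    _ = -(X₁₁ * (Cᵀ * R)) * (R⁻¹ * Rᵀ⁻¹) := by rw [eq_neg_of_add_eq_zero_right h]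
    _ = -X₁₁ * (R⁻¹ * C)ᵀ := by
        rw [transpose_mul, transpose_nonsing_inv, Matrix.neg_mul, Matrix.neg_mul,
          Matrix.mul_assoc, Matrix.mul_assoc, mul_nonsing_inv_cancel_left _ _ hR]

lemma eq_inv_mul_sub_of_mul_add_mul_eq_one (hR : IsUnit R.det)
    {X₁₂ : Matrix p n K} {X₂₂ : Matrix n n K} (h : Rᵀ * C * X₁₂ + Rᵀ * R * X₂₂ = 1) :
    X₂₂ = R⁻¹ * (Rᵀ⁻¹ - C * X₁₂) := by
  have hinv : Rᵀ⁻¹ = C * X₁₂ + R * X₂₂ :=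
    inv_eq_right_inv (by rw [Matrix.mul_add, ← Matrix.mul_assoc, ← Matrix.mul_assoc, h])
  rw [hinv, add_sub_cancel_left, nonsing_inv_mul_cancel_left _ _ hR]

end BlockElimination

section FromRowsZero

variable {l n k K : Type*} [Fintype n] [Fintype k] [CommRing K]

lemma transpose_mul_mul_fromRows_zero (Y : Matrix (n ⊕ k) l K) (Q : Matrix (n ⊕ k) (n ⊕ k) K)
    (R : Matrix n n K) :
    Yᵀ * (Q * fromRows R (0 : Matrix k n K)) = ((Qᵀ * Y).submatrix .inl id)ᵀ * R := by
  rw [← Matrix.mul_assoc, ← transpose_transpose (Yᵀ * Q), transpose_mul, transpose_transpose]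
  ext a b
  simp [mul_apply, Fintype.sum_sum_type]

lemma transpose_mul_self_of_eq_mul_fromRows_zero [DecidableEq n] [DecidableEq k]
    {B : Matrix (n ⊕ k) n K} {Q : Matrix (n ⊕ k) (n ⊕ k) K} (hQ : Qᵀ * Q = 1) {R : Matrix n n K}
    (hB : B = Q * fromRows R (0 : Matrix k n K)) : Bᵀ * B = Rᵀ * R := by
  subst hB
  rw [transpose_mul_mul_fromRows_zero, ← Matrix.mul_assoc, hQ, Matrix.one_mul]
  rfl

end FromRowsZero

end Matrix

section twoLevelGram

variable {p q m : ℕ} {k : Fin m → ℕ}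
    (B1 : (i : Fin m) → Matrix (Fin q ⊕ Fin (k i)) (Fin p) ℝ)
    (B2 : (i : Fin m) → Matrix (Fin q ⊕ Fin (k i)) (Fin q) ℝ)

lemma twoLevelB_gram_inl_inr (i : Fin m) :
    ((twoLevelB B1 B2)ᵀ * twoLevelB B1 B2).submatrix .inl (fun b => .inr (i, b)) =
      (B1 i)ᵀ * B2 i := by
  ext a b
  simp [twoLevelB, mul_apply, Fintype.sum_sigma]

lemma twoLevelB_gram_inr_inr (j i : Fin m) (a b : Fin q) :
    ((twoLevelB B1 B2)ᵀ * twoLevelB B1 B2) (.inr (j, a)) (.inr (i, b)) =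
      if j = i then ((B2 i)ᵀ * B2 i) a b else 0 := by
  simp [twoLevelB, mul_apply, Fintype.sum_sigma, eq_comm]

end twoLevelGram

theorem twoLevelLS_inverse_blocks12_22_general {p q m : ℕ} {k : Fin m → ℕ}
    (B1 : (i : Fin m) → Matrix (Fin q ⊕ Fin (k i)) (Fin p) ℝ)
    (B2 : (i : Fin m) → Matrix (Fin q ⊕ Fin (k i)) (Fin q) ℝ)
    (hrank : (twoLevelB B1 B2).rank = p + m * q)
    (Q1 : (i : Fin m) → Matrix (Fin q ⊕ Fin (k i)) (Fin q ⊕ Fin (k i)) ℝ)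
    (hQ1 : ∀ i, (Q1 i)ᵀ * Q1 i = 1)
    (R1 : (i : Fin m) → Matrix (Fin q) (Fin q) ℝ)
    (hR1 : ∀ i, IsUnit (R1 i).det)
    (hQR1 : ∀ i, B2 i = Q1 i * Matrix.fromRows (R1 i) 0)
    :
    ∀ i : Fin m,
      (((twoLevelB B1 B2)ᵀ * twoLevelB B1 B2)⁻¹).submatrix
          Sum.inl (fun b => Sum.inr (i, b)) =
        -((((twoLevelB B1 B2)ᵀ * twoLevelB B1 B2)⁻¹).submatrix Sum.inl Sum.inl) *
          ((R1 i)⁻¹ * C1 Q1 B1 i)ᵀ ∧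
      (((twoLevelB B1 B2)ᵀ * twoLevelB B1 B2)⁻¹).submatrix
          (fun a => Sum.inr (i, a)) (fun b => Sum.inr (i, b)) =
        (R1 i)⁻¹ * (((R1 i)ᵀ)⁻¹ - C1 Q1 B1 i *
          (((twoLevelB B1 B2)ᵀ * twoLevelB B1 B2)⁻¹).submatrix
            Sum.inl (fun b => Sum.inr (i, b))) := by
  intro i
  have hA : IsUnit ((twoLevelB B1 B2)ᵀ * twoLevelB B1 B2).det :=
    isUnit_det_of_rank_eq_card (by simp [rank_transpose_mul_self, hrank])
  have hcorner := twoLevelB_gram_inr_inr B1 B2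
  have hA22 : (B2 i)ᵀ * B2 i = (R1 i)ᵀ * R1 i :=
    transpose_mul_self_of_eq_mul_fromRows_zero (hQ1 i) (hQR1 i)
  have hA12 : ((twoLevelB B1 B2)ᵀ * twoLevelB B1 B2).submatrix .inl (fun b => .inr (i, b)) =
      (C1 Q1 B1 i)ᵀ * R1 i := by
    rw [twoLevelB_gram_inl_inr, hQR1 i]
    -- `hQR1` is elaborated with `CStarMatrix` multiplication, so this only matches up to defeq
    exact transpose_mul_mul_fromRows_zero _ _ _
  have hA21 : ((twoLevelB B1 B2)ᵀ * twoLevelB B1 B2).submatrix (fun a => .inr (i, a)) .inl =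
      (R1 i)ᵀ * C1 Q1 B1 i := by
    have hsymm : ((twoLevelB B1 B2)ᵀ * twoLevelB B1 B2)ᵀ =
        (twoLevelB B1 B2)ᵀ * twoLevelB B1 B2 := by
      rw [transpose_mul, transpose_transpose]
    rw [← hsymm, ← transpose_submatrix, hA12, transpose_mul, transpose_transpose]
  constructor
  · refine eq_neg_mul_transpose_inv_mul_of_mul_add_mul_eq_zero (hR1 i) ?_
    rw [← hA12, ← hA22, ← submatrix_mul_inr_of_blockDiagonal_corner hcorner,
      nonsing_inv_mul _ hA]
    ext
    simp [one_apply]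
  · refine eq_inv_mul_sub_of_mul_add_mul_eq_one (hR1 i) ?_
    rw [← hA21, ← hA22, ← submatrix_inr_mul_of_blockDiagonal_corner hcorner,
      mul_nonsing_inv _ hA, submatrix_one _ (fun _ _ h => by simpa using h)]

theorem twoLevelLS_inverse_blocks12_22 {p q m s : ℕ} {k : Fin m → ℕ}
    (hp : 0 < p) (hq : 0 < q) (hm : 0 < m)
    (B1 : (i : Fin m) → Matrix (Fin q ⊕ Fin (k i)) (Fin p) ℝ)
    (B2 : (i : Fin m) → Matrix (Fin q ⊕ Fin (k i)) (Fin q) ℝ)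
    (hrank : (twoLevelB B1 B2).rank = p + m * q)
    (Q1 : (i : Fin m) → Matrix (Fin q ⊕ Fin (k i)) (Fin q ⊕ Fin (k i)) ℝ)
    (hQ1 : ∀ i, (Q1 i)ᵀ * Q1 i = 1) (hQ1' : ∀ i, Q1 i * (Q1 i)ᵀ = 1)
    (R1 : (i : Fin m) → Matrix (Fin q) (Fin q) ℝ)
    (hR1tri : ∀ i, (R1 i).BlockTriangular id)
    (hR1 : ∀ i, IsUnit (R1 i).det)
    (hQR1 : ∀ i, B2 i = Q1 i * Matrix.fromRows (R1 i) 0)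
    (Q : Matrix ((i : Fin m) × Fin (k i)) (Fin p ⊕ Fin s) ℝ)
    (hQ : Qᵀ * Q = 1) (hQ' : Q * Qᵀ = 1)
    (R : Matrix (Fin p) (Fin p) ℝ)
    (hRtri : R.BlockTriangular id) (hR : IsUnit R.det)
    (hQR : stackC2 Q1 B1 = Q * Matrix.fromRows R 0)
    :
    ∀ i : Fin m,
      (((twoLevelB B1 B2)ᵀ * twoLevelB B1 B2)⁻¹).submatrix
          Sum.inl (fun b => Sum.inr (i, b)) =
        -((((twoLevelB B1 B2)ᵀ * twoLevelB B1 B2)⁻¹).submatrix Sum.inl Sum.inl) *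
          ((R1 i)⁻¹ * C1 Q1 B1 i)ᵀ ∧
      (((twoLevelB B1 B2)ᵀ * twoLevelB B1 B2)⁻¹).submatrix
          (fun a => Sum.inr (i, a)) (fun b => Sum.inr (i, b)) =
        (R1 i)⁻¹ * (((R1 i)ᵀ)⁻¹ - C1 Q1 B1 i *
          (((twoLevelB B1 B2)ᵀ * twoLevelB B1 B2)⁻¹).submatrix
            Sum.inl (fun b => Sum.inr (i, b))) :=
  twoLevelLS_inverse_blocks12_22_general B1 B2 hrank Q1 hQ1 R1 hR1 hQR1
end

section
/- In the two-level least squares setting with the given QR decompositions, if x ∈ ℝ^{p+mq} satisfies A x = Bᵀ b, where x is partitioned into a p-block x₁ and q-blocks x₂,ᵢ, then x₁ = R⁻¹ c and x₂,ᵢ = Rᵢ⁻¹ (c₁ᵢ − C₁ᵢ x₁) for all 1 ≤ i ≤ m. -/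
/-!
Write `rᵢ := Bᵢ x₁ + B̊ᵢ x₂,ᵢ − bᵢ` for the residual of group `i`. The normal equations split into
the group equations `B̊ᵢᵀ rᵢ = 0` and the global equation `Σᵢ Bᵢᵀ rᵢ = 0`. Both are solved by a
QR factorisation: if `A = Q [R; 0]` with `QᵀQ = 1`, then `Aᵀ v = Rᵀ (Qᵀ v)₁`, so `Aᵀ (A x − c) = 0`
forces `R x = (Qᵀ c)₁`. The group equations give `x₂,ᵢ`; they also make the first `q` entries of
`Qᵢᵀ rᵢ` vanish, which turns `Σᵢ Bᵢᵀ rᵢ` into `Σᵢ C₂ᵢᵀ (C₂ᵢ x₁ − c₂ᵢ)`, the normal equation of the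
stacked problem for `x₁`.
-/

open Matrix

section QR

variable {α m n k : Type*} [CommRing α] [Fintype m] [Fintype n] [Fintype k]
  {A : Matrix m n α} {Q : Matrix m (n ⊕ k) α} {R : Matrix n n α}

theorem transpose_mulVec_of_eq_mul_fromRows (hA : A = Q * fromRows R (0 : Matrix k n α))
    (v : m → α) :
    Aᵀ *ᵥ v = Rᵀ *ᵥ ((Qᵀ *ᵥ v) ∘ Sum.inl) := by
  rw [hA, transpose_mul, ← mulVec_mulVec, transpose_fromRows, fromCols_mulVec, transpose_zero,
    zero_mulVec, add_zero]

theorem transpose_mulVec_mulVec_of_eq_mul_fromRows [DecidableEq n] [DecidableEq k]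
    (hQ : Qᵀ * Q = 1) (hA : A = Q * fromRows R (0 : Matrix k n α)) (x : n → α) :
    Qᵀ *ᵥ (A *ᵥ x) = Sum.elim (R *ᵥ x) 0 := by
  rw [hA, mulVec_mulVec, ← Matrix.mul_assoc, hQ, Matrix.one_mul, fromRows_mulVec, zero_mulVec]

theorem transpose_mulVec_comp_inl_eq_zero [DecidableEq n] (hR : IsUnit R.det)
    (hA : A = Q * fromRows R (0 : Matrix k n α)) {v : m → α} (hv : Aᵀ *ᵥ v = 0) :
    (Qᵀ *ᵥ v) ∘ Sum.inl = 0 := by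
  have hRt : IsUnit Rᵀ := (isUnit_iff_isUnit_det _).2 (by rwa [det_transpose])
  apply mulVec_injective_of_isUnit hRt
  rw [← transpose_mulVec_of_eq_mul_fromRows hA, hv, mulVec_zero]

theorem eq_inv_mulVec_of_normal_eq [DecidableEq n] [DecidableEq k]
    (hQ : Qᵀ * Q = 1) (hR : IsUnit R.det) (hA : A = Q * fromRows R (0 : Matrix k n α))
    {x : n → α} {c : m → α} (h : Aᵀ *ᵥ (A *ᵥ x - c) = 0) :
    x = R⁻¹ *ᵥ ((Qᵀ *ᵥ c) ∘ Sum.inl) := by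
  have hRx : R *ᵥ x = (Qᵀ *ᵥ c) ∘ Sum.inl := by
    have h₁ := transpose_mulVec_comp_inl_eq_zero hR hA h
    rw [mulVec_sub, transpose_mulVec_mulVec_of_eq_mul_fromRows hQ hA] at h₁
    exact sub_eq_zero.1 h₁
  rw [← hRx, mulVec_mulVec, nonsing_inv_mul _ hR, one_mulVec]

end QR

theorem transpose_mulVec_eq_of_comp_inl_eq_zero {α m₁ m₂ n : Type*} [CommSemiring α]
    [Fintype m₁] [Fintype m₂] (M : Matrix (m₁ ⊕ m₂) n α) {v : m₁ ⊕ m₂ → α} (hv : v ∘ Sum.inl = 0) :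
    Mᵀ *ᵥ v = (M.submatrix Sum.inr id)ᵀ *ᵥ (v ∘ Sum.inr) := by
  rw [mulVec_transpose, mulVec_transpose, ← fromRows_toRows M, vecMul_fromRows, hv, zero_vecMul,
    zero_add]
  rfl

section TwoLevel

variable {p q m : ℕ} {k : Fin m → ℕ}
  (B1 : (i : Fin m) → Matrix (Fin q ⊕ Fin (k i)) (Fin p) ℝ)
  (B2 : (i : Fin m) → Matrix (Fin q ⊕ Fin (k i)) (Fin q) ℝ)
  (Q1 : (i : Fin m) → Matrix (Fin q ⊕ Fin (k i)) (Fin q ⊕ Fin (k i)) ℝ)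

theorem twoLevelB_mulVec (x : Fin p ⊕ Fin m × Fin q → ℝ) :
    twoLevelB B1 B2 *ᵥ x =
      fun y => (B1 y.1 *ᵥ (x ∘ Sum.inl) + B2 y.1 *ᵥ fun b => x (Sum.inr (y.1, b))) y.2 := by
  ext ⟨i, j⟩
  simp only [mulVec, dotProduct, Fintype.sum_sum_type, Fintype.sum_prod_type, Pi.add_apply]
  congr 1
  rw [Finset.sum_eq_single i (fun i' _ hi' => by simp [twoLevelB, Ne.symm hi']) (by simp)]
  simp [twoLevelB]

theorem twoLevelB_transpose_mulVec_inl (v : (i : Fin m) → Fin q ⊕ Fin (k i) → ℝ) (a : Fin p) :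
    ((twoLevelB B1 B2)ᵀ *ᵥ fun y => v y.1 y.2) (Sum.inl a) = (∑ i, (B1 i)ᵀ *ᵥ v i) a := by
  simp [mulVec, dotProduct, Fintype.sum_sigma, twoLevelB, Finset.sum_apply]

theorem twoLevelB_transpose_mulVec_inr (v : (i : Fin m) → Fin q ⊕ Fin (k i) → ℝ) (i : Fin m)
    (b : Fin q) :
    ((twoLevelB B1 B2)ᵀ *ᵥ fun y => v y.1 y.2) (Sum.inr (i, b)) = ((B2 i)ᵀ *ᵥ v i) b := by
  simp [mulVec, dotProduct, Fintype.sum_sigma, twoLevelB]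

theorem stackC2_transpose_mulVec (v : (i : Fin m) → Fin (k i) → ℝ) :
    (stackC2 Q1 B1)ᵀ *ᵥ (fun y => v y.1 y.2) = ∑ i, (C2 Q1 B1 i)ᵀ *ᵥ v i := by
  ext a
  simp [mulVec, dotProduct, Fintype.sum_sigma, stackC2, Finset.sum_apply]

end TwoLevel

section Group

variable {p q m : ℕ} {k : Fin m → ℕ}
  {B1 : (i : Fin m) → Matrix (Fin q ⊕ Fin (k i)) (Fin p) ℝ}
  {B2 : (i : Fin m) → Matrix (Fin q ⊕ Fin (k i)) (Fin q) ℝ}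
  {Q1 : (i : Fin m) → Matrix (Fin q ⊕ Fin (k i)) (Fin q ⊕ Fin (k i)) ℝ}
  {R1 : (i : Fin m) → Matrix (Fin q) (Fin q) ℝ} {i : Fin m}
  {x₁ : Fin p → ℝ} {x₂ : Fin q → ℝ} {b : Fin q ⊕ Fin (k i) → ℝ}

theorem eq_inv_mulVec_of_group_normal_eq (hQ1 : (Q1 i)ᵀ * Q1 i = 1) (hR1 : IsUnit (R1 i).det)
    (hQR1 : B2 i = Q1 i * fromRows (R1 i) 0)
    (h : (B2 i)ᵀ *ᵥ (B1 i *ᵥ x₁ + B2 i *ᵥ x₂ - b) = 0) :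
    x₂ = (R1 i)⁻¹ *ᵥ (((Q1 i)ᵀ *ᵥ b) ∘ Sum.inl - C1 Q1 B1 i *ᵥ x₁) := by
  have hx₂ := eq_inv_mulVec_of_normal_eq hQ1 hR1 hQR1 (x := x₂) (c := b - B1 i *ᵥ x₁)
    (by convert h using 2; abel)
  rw [hx₂, mulVec_sub, mulVec_mulVec]
  rfl

theorem B1_transpose_mulVec_group_residual (hQ1 : (Q1 i)ᵀ * Q1 i = 1) (hR1 : IsUnit (R1 i).det)
    (hQR1 : B2 i = Q1 i * fromRows (R1 i) 0)
    (h : (B2 i)ᵀ *ᵥ (B1 i *ᵥ x₁ + B2 i *ᵥ x₂ - b) = 0) :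
    (B1 i)ᵀ *ᵥ (B1 i *ᵥ x₁ + B2 i *ᵥ x₂ - b) =
      (C2 Q1 B1 i)ᵀ *ᵥ (C2 Q1 B1 i *ᵥ x₁ - ((Q1 i)ᵀ *ᵥ b) ∘ Sum.inr) := by
  set r := B1 i *ᵥ x₁ + B2 i *ᵥ x₂ - b
  have hr : r = Q1 i *ᵥ ((Q1 i)ᵀ *ᵥ r) := by
    rw [mulVec_mulVec, mul_eq_one_comm.1 hQ1, one_mulVec]
  have hbot : ((Q1 i)ᵀ *ᵥ r) ∘ Sum.inr = C2 Q1 B1 i *ᵥ x₁ - ((Q1 i)ᵀ *ᵥ b) ∘ Sum.inr := by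
    rw [mulVec_sub, mulVec_add, transpose_mulVec_mulVec_of_eq_mul_fromRows hQ1 hQR1,
      mulVec_mulVec]
    ext j
    simp only [Function.comp_apply, Pi.add_apply, Pi.sub_apply, Sum.elim_inr, Pi.zero_apply,
      add_zero]
    rfl
  have hC0 : (B1 i)ᵀ * Q1 i = (C0 Q1 B1 i)ᵀ := by
    rw [C0, transpose_mul, transpose_transpose]
  rw [hr, mulVec_mulVec, hC0,
    transpose_mulVec_eq_of_comp_inl_eq_zero _ (transpose_mulVec_comp_inl_eq_zero hR1 hQR1 h), hbot]
  rfl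

end Group

theorem twoLevelLS_linear_system_general {p q m s : ℕ} {k : Fin m → ℕ}
    (B1 : (i : Fin m) → Matrix (Fin q ⊕ Fin (k i)) (Fin p) ℝ)
    (B2 : (i : Fin m) → Matrix (Fin q ⊕ Fin (k i)) (Fin q) ℝ)
    (Q1 : (i : Fin m) → Matrix (Fin q ⊕ Fin (k i)) (Fin q ⊕ Fin (k i)) ℝ)
    (hQ1 : ∀ i, (Q1 i)ᵀ * Q1 i = 1)
    (R1 : (i : Fin m) → Matrix (Fin q) (Fin q) ℝ)
    (hR1 : ∀ i, IsUnit (R1 i).det)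
    (hQR1 : ∀ i, B2 i = Q1 i * Matrix.fromRows (R1 i) 0)
    (Q : Matrix ((i : Fin m) × Fin (k i)) (Fin p ⊕ Fin s) ℝ)
    (hQ : Qᵀ * Q = 1)
    (R : Matrix (Fin p) (Fin p) ℝ)
    (hR : IsUnit R.det)
    (hQR : stackC2 Q1 B1 = Q * Matrix.fromRows R 0)
    (b1 : (i : Fin m) → (Fin q ⊕ Fin (k i)) → ℝ)
    (x : (Fin p ⊕ Fin m × Fin q) → ℝ)
    (hx : ((twoLevelB B1 B2)ᵀ * twoLevelB B1 B2).mulVec x =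
      (twoLevelB B1 B2)ᵀ.mulVec (fun r => b1 r.1 r.2)) :
    (x ∘ Sum.inl) =
      R⁻¹.mulVec ((Qᵀ.mulVec fun r => ((Q1 r.1)ᵀ.mulVec (b1 r.1)) (Sum.inr r.2)) ∘ Sum.inl) ∧
    ∀ i : Fin m,
      (fun b => x (Sum.inr (i, b))) =
        ((R1 i)⁻¹).mulVec
          ((((Q1 i)ᵀ.mulVec (b1 i)) ∘ Sum.inl) - (C1 Q1 B1 i).mulVec (x ∘ Sum.inl)) := by
  set x₁ := x ∘ Sum.inl
  set x₂ : (i : Fin m) → Fin q → ℝ := fun i b => x (Sum.inr (i, b))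
  set r := fun i => B1 i *ᵥ x₁ + B2 i *ᵥ x₂ i - b1 i
  have hnormal : (twoLevelB B1 B2)ᵀ *ᵥ (fun y => r y.1 y.2) = 0 := by
    rw [← mulVec_mulVec, ← sub_eq_zero, ← mulVec_sub, twoLevelB_mulVec] at hx
    exact hx
  have hgroup (i : Fin m) : (B2 i)ᵀ *ᵥ r i = 0 := by
    ext b
    rw [← twoLevelB_transpose_mulVec_inr B1 B2, hnormal]
    rfl
  have hglobal : ∑ i, (B1 i)ᵀ *ᵥ r i = 0 := by
    ext a
    rw [← twoLevelB_transpose_mulVec_inl B1 B2, hnormal]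
    rfl
  refine ⟨eq_inv_mulVec_of_normal_eq hQ hR hQR ?_,
    fun i => eq_inv_mulVec_of_group_normal_eq (hQ1 i) (hR1 i) (hQR1 i) (hgroup i)⟩
  rw [← hglobal, Finset.sum_congr rfl fun i _ =>
    B1_transpose_mulVec_group_residual (hQ1 i) (hR1 i) (hQR1 i) (hgroup i),
    ← stackC2_transpose_mulVec]
  rfl

theorem twoLevelLS_linear_system {p q m s : ℕ} {k : Fin m → ℕ}
    (hp : 0 < p) (hq : 0 < q) (hm : 0 < m)
    (B1 : (i : Fin m) → Matrix (Fin q ⊕ Fin (k i)) (Fin p) ℝ)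
    (B2 : (i : Fin m) → Matrix (Fin q ⊕ Fin (k i)) (Fin q) ℝ)
    (hrank : (twoLevelB B1 B2).rank = p + m * q)
    (Q1 : (i : Fin m) → Matrix (Fin q ⊕ Fin (k i)) (Fin q ⊕ Fin (k i)) ℝ)
    (hQ1 : ∀ i, (Q1 i)ᵀ * Q1 i = 1) (hQ1' : ∀ i, Q1 i * (Q1 i)ᵀ = 1)
    (R1 : (i : Fin m) → Matrix (Fin q) (Fin q) ℝ)
    (hR1tri : ∀ i, (R1 i).BlockTriangular id)
    (hR1 : ∀ i, IsUnit (R1 i).det)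
    (hQR1 : ∀ i, B2 i = Q1 i * Matrix.fromRows (R1 i) 0)
    (Q : Matrix ((i : Fin m) × Fin (k i)) (Fin p ⊕ Fin s) ℝ)
    (hQ : Qᵀ * Q = 1) (hQ' : Q * Qᵀ = 1)
    (R : Matrix (Fin p) (Fin p) ℝ)
    (hRtri : R.BlockTriangular id) (hR : IsUnit R.det)
    (hQR : stackC2 Q1 B1 = Q * Matrix.fromRows R 0)
    (b1 : (i : Fin m) → (Fin q ⊕ Fin (k i)) → ℝ)
    (x : (Fin p ⊕ Fin m × Fin q) → ℝ)
    (hx : ((twoLevelB B1 B2)ᵀ * twoLevelB B1 B2).mulVec x =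
      (twoLevelB B1 B2)ᵀ.mulVec (fun r => b1 r.1 r.2)) :
    (x ∘ Sum.inl) =
      R⁻¹.mulVec ((Qᵀ.mulVec fun r => ((Q1 r.1)ᵀ.mulVec (b1 r.1)) (Sum.inr r.2)) ∘ Sum.inl) ∧
    ∀ i : Fin m,
      (fun b => x (Sum.inr (i, b))) =
        ((R1 i)⁻¹).mulVec
          ((((Q1 i)ᵀ.mulVec (b1 i)) ∘ Sum.inl) - (C1 Q1 B1 i).mulVec (x ∘ Sum.inl)) :=
  twoLevelLS_linear_system_general B1 B2 Q1 hQ1 R1 hR1 hQR1 Q hQ R hR hQR b1 x hx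
end

section
/- Let A be an invertible three-level sparse matrix built from blocks A₁₁, A₁₂,ᵢ, A₁₂,ᵢⱼ, A₂₂,ᵢ, A₁₂,(i),(j), A₂₂,ᵢⱼ, suppose each A₂₂,ᵢⱼ is invertible and each H₂₂,ᵢ is invertible. Then the p×p matrix A₁₁ − Σ_{i=1}^m Σ_{j=1}^{nᵢ} A₁₂,ᵢⱼ A₂₂,ᵢⱼ⁻¹ A₁₂,ᵢⱼᵀ − Σ_{i=1}^m H₁₂,ᵢ H₂₂,ᵢ⁻¹ H₁₂,ᵢᵀ is invertible and the sub-block A¹¹ of A⁻¹ equals its inverse. -/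
open Matrix

/-- The three-level sparse matrix built from blocks `A11`, `A12 i` (level 1–2),
`A12' i j` (level 1–3), `A22 i` (level-2 diagonal), `A12'' i j` (level 2–3) and
`A22' i j` (level-3 diagonal). -/
def threeLevelSparse {p q₁ q₂ m : ℕ} {n : Fin m → ℕ}
    (A11 : Matrix (Fin p) (Fin p) ℝ)
    (A12 : (i : Fin m) → Matrix (Fin p) (Fin q₁) ℝ)
    (A12' : (i : Fin m) → Fin (n i) → Matrix (Fin p) (Fin q₂) ℝ)
    (A22 : (i : Fin m) → Matrix (Fin q₁) (Fin q₁) ℝ)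
    (A12'' : (i : Fin m) → Fin (n i) → Matrix (Fin q₁) (Fin q₂) ℝ)
    (A22' : (i : Fin m) → Fin (n i) → Matrix (Fin q₂) (Fin q₂) ℝ) :
    Matrix (Fin p ⊕ (Σ i : Fin m, Fin q₁ ⊕ (Fin (n i) × Fin q₂)))
           (Fin p ⊕ (Σ i : Fin m, Fin q₁ ⊕ (Fin (n i) × Fin q₂))) ℝ :=
  Matrix.of fun x y =>
    match x, y with
    | Sum.inl a, Sum.inl b => A11 a b
    | Sum.inl a, Sum.inr ⟨i, Sum.inl b⟩ => A12 i a b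
    | Sum.inl a, Sum.inr ⟨i, Sum.inr (j, b)⟩ => A12' i j a b
    | Sum.inr ⟨i, Sum.inl a⟩, Sum.inl b => A12 i b a
    | Sum.inr ⟨i, Sum.inr (j, a)⟩, Sum.inl b => A12' i j b a
    | Sum.inr ⟨i, Sum.inl a⟩, Sum.inr ⟨i', Sum.inl b⟩ =>
        if i = i' then A22 i a b else 0
    | Sum.inr ⟨i, Sum.inl a⟩, Sum.inr ⟨i', Sum.inr (j, b)⟩ =>
        if i = i' then A12'' i' j a b else 0
    | Sum.inr ⟨i, Sum.inr (j, a)⟩, Sum.inr ⟨i', Sum.inl b⟩ =>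
        if i = i' then A12'' i j b a else 0
    | Sum.inr ⟨i, Sum.inr (j, a)⟩, Sum.inr ⟨i', Sum.inr (j', b)⟩ =>
        if (⟨i, j⟩ : Σ i, Fin (n i)) = ⟨i', j'⟩ then A22' i' j' a b else 0

/-- `H₁₂,ᵢ := A₁₂,ᵢ − Σⱼ A₁₂,ᵢⱼ A₂₂,ᵢⱼ⁻¹ A₁₂,(i),(j)ᵀ`. -/
noncomputable def H12 {p q₁ q₂ m : ℕ} {n : Fin m → ℕ}
    (A12 : (i : Fin m) → Matrix (Fin p) (Fin q₁) ℝ)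
    (A12' : (i : Fin m) → Fin (n i) → Matrix (Fin p) (Fin q₂) ℝ)
    (A12'' : (i : Fin m) → Fin (n i) → Matrix (Fin q₁) (Fin q₂) ℝ)
    (A22' : (i : Fin m) → Fin (n i) → Matrix (Fin q₂) (Fin q₂) ℝ)
    (i : Fin m) : Matrix (Fin p) (Fin q₁) ℝ :=
  A12 i - ∑ j, A12' i j * (A22' i j)⁻¹ * (A12'' i j)ᵀ

/-- `H₂₂,ᵢ := A₂₂,ᵢ − Σⱼ A₁₂,(i),(j) A₂₂,ᵢⱼ⁻¹ A₁₂,(i),(j)ᵀ`. -/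
noncomputable def H22 {q₁ q₂ m : ℕ} {n : Fin m → ℕ}
    (A22 : (i : Fin m) → Matrix (Fin q₁) (Fin q₁) ℝ)
    (A12'' : (i : Fin m) → Fin (n i) → Matrix (Fin q₁) (Fin q₂) ℝ)
    (A22' : (i : Fin m) → Fin (n i) → Matrix (Fin q₂) (Fin q₂) ℝ)
    (i : Fin m) : Matrix (Fin q₁) (Fin q₁) ℝ :=
  A22 i - ∑ j, A12'' i j * (A22' i j)⁻¹ * (A12'' i j)ᵀ

/-!
Write `A = [[A₁₁, C], [Cᵀ, D]]` with `D = diag(D₁, …, D_m)`, `Dᵢ = [[A₂₂,ᵢ, Bᵢ], [Bᵢᵀ, Eᵢ]]`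
and `Eᵢ = diag(A₂₂,ᵢ₁, …, A₂₂,ᵢₙᵢ)`. The Schur complement of `Eᵢ` in `Dᵢ` is `H₂₂,ᵢ`, so `Dᵢ` is
invertible, and the 2×2 block-inverse formula applied to `Dᵢ` gives
`Cᵢ Dᵢ⁻¹ Cᵢᵀ = Σⱼ A₁₂,ᵢⱼ A₂₂,ᵢⱼ⁻¹ A₁₂,ᵢⱼᵀ + H₁₂,ᵢ H₂₂,ᵢ⁻¹ H₁₂,ᵢᵀ` (symmetry of the `A₂₂,ᵢⱼ`
identifies the right factor with `H₁₂,ᵢᵀ`). Summing over `i`, the matrix of the statement is the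
Schur complement `A₁₁ − C D⁻¹ Cᵀ` of `D` in `A`: it is invertible since
`det A = det D · det (A₁₁ − C D⁻¹ Cᵀ)`, and its inverse is the `(1,1)` block of `A⁻¹`.
-/

namespace Matrix

variable {R : Type*} [CommRing R] {l m n : Type*}

section Schur

variable [Fintype m] [DecidableEq m] [Fintype n] [DecidableEq n]

theorem det_fromBlocks₂₂_of_isUnit (A : Matrix m m R) (B : Matrix m n R) (C : Matrix n m R)
    {D : Matrix n n R} (hD : IsUnit D.det) :
    (fromBlocks A B C D).det = D.det * (A - B * D⁻¹ * C).det := by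
  let := D.invertibleOfIsUnitDet hD
  rw [det_fromBlocks₂₂, invOf_eq_nonsing_inv]

theorem inv_fromBlocks₂₂_of_isUnit (A : Matrix m m R) (B : Matrix m n R) (C : Matrix n m R)
    {D : Matrix n n R} (hD : IsUnit D.det) (hS : IsUnit (A - B * D⁻¹ * C).det) :
    (fromBlocks A B C D)⁻¹ =
      fromBlocks (A - B * D⁻¹ * C)⁻¹ (-((A - B * D⁻¹ * C)⁻¹ * B * D⁻¹))
        (-(D⁻¹ * C * (A - B * D⁻¹ * C)⁻¹))
        (D⁻¹ + D⁻¹ * C * (A - B * D⁻¹ * C)⁻¹ * B * D⁻¹) := by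
  let := D.invertibleOfIsUnitDet hD
  let := (A - B * ⅟D * C).invertibleOfIsUnitDet (by rwa [invOf_eq_nonsing_inv])
  let := fromBlocks₂₂Invertible A B C D
  simp only [← invOf_eq_nonsing_inv, invOf_fromBlocks₂₂_eq]

theorem fromCols_mul_inv_fromBlocks₂₂_mul_fromRows (X : Matrix l m R) (Y : Matrix l n R)
    (A : Matrix m m R) (B : Matrix m n R) (C : Matrix n m R) {D : Matrix n n R}
    (U : Matrix m l R) (V : Matrix n l R)
    (hD : IsUnit D.det) (hS : IsUnit (A - B * D⁻¹ * C).det) :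
    fromCols X Y * (fromBlocks A B C D)⁻¹ * fromRows U V =
      Y * D⁻¹ * V + (X - Y * D⁻¹ * C) * (A - B * D⁻¹ * C)⁻¹ * (U - B * D⁻¹ * V) := by
  rw [inv_fromBlocks₂₂_of_isUnit A B C hD hS, fromCols_mul_fromBlocks, fromCols_mul_fromRows]
  simp only [Matrix.mul_add, Matrix.add_mul, Matrix.mul_sub, Matrix.sub_mul, Matrix.mul_neg,
    Matrix.neg_mul, Matrix.mul_assoc]
  abel

end Schur

section Sigma

variable {ι : Type*} {T : ι → Type*}

def sigmaFromCols (f : (i : ι) → Matrix l (T i) R) : Matrix l (Σ i, T i) R :=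
  of fun a x => f x.1 a x.2

variable [Fintype ι] [∀ i, Fintype (T i)]

theorem sigmaFromCols_mul_transpose {l' : Type*} (f : (i : ι) → Matrix l (T i) R)
    (g : (i : ι) → Matrix l' (T i) R) :
    sigmaFromCols f * (sigmaFromCols g)ᵀ = ∑ i, f i * (g i)ᵀ := by
  ext a b
  rw [mul_apply, ← Finset.univ_sigma_univ, Finset.sum_sigma]
  simp [sigmaFromCols, mul_apply, sum_apply]

variable [DecidableEq ι]

theorem sigmaFromCols_mul_blockDiagonal' (f : (i : ι) → Matrix l (T i) R)
    (M : (i : ι) → Matrix (T i) (T i) R) :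
    sigmaFromCols f * blockDiagonal' M = sigmaFromCols fun i => f i * M i := by
  ext a ⟨i, y⟩
  rw [mul_apply, ← Finset.univ_sigma_univ, Finset.sum_sigma, Finset.sum_eq_single i]
  · simp [sigmaFromCols, mul_apply]
  · intro i' _ hi'
    simp [blockDiagonal'_apply, hi']
  · simp

variable [∀ i, DecidableEq (T i)]

theorem blockDiagonal'_mul_blockDiagonal'_inv {M : (i : ι) → Matrix (T i) (T i) R}
    (hM : ∀ i, IsUnit (M i).det) : blockDiagonal' M * blockDiagonal' (fun i => (M i)⁻¹) = 1 := by
  rw [← blockDiagonal'_mul]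
  simp only [fun i => mul_nonsing_inv (M i) (hM i)]
  exact blockDiagonal'_one

theorem inv_blockDiagonal' {M : (i : ι) → Matrix (T i) (T i) R} (hM : ∀ i, IsUnit (M i).det) :
    (blockDiagonal' M)⁻¹ = blockDiagonal' fun i => (M i)⁻¹ :=
  inv_eq_right_inv (blockDiagonal'_mul_blockDiagonal'_inv hM)

theorem isUnit_det_blockDiagonal' {M : (i : ι) → Matrix (T i) (T i) R}
    (hM : ∀ i, IsUnit (M i).det) : IsUnit (blockDiagonal' M).det :=
  isUnit_det_of_right_inverse (blockDiagonal'_mul_blockDiagonal'_inv hM)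

theorem sigmaFromCols_mul_inv_blockDiagonal'_mul_transpose {l' : Type*}
    (f : (i : ι) → Matrix l (T i) R) {M : (i : ι) → Matrix (T i) (T i) R}
    (g : (i : ι) → Matrix l' (T i) R) (hM : ∀ i, IsUnit (M i).det) :
    sigmaFromCols f * (blockDiagonal' M)⁻¹ * (sigmaFromCols g)ᵀ = ∑ i, f i * (M i)⁻¹ * (g i)ᵀ := by
  rw [inv_blockDiagonal' hM, sigmaFromCols_mul_blockDiagonal', sigmaFromCols_mul_transpose]

end Sigma

section Prod

variable {ν κ : Type*}

def prodFromCols (f : ν → Matrix l κ R) : Matrix l (ν × κ) R :=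
  (sigmaFromCols f).submatrix id (Equiv.sigmaEquivProd ν κ).symm

/-- Unlike `Matrix.blockDiagonal`, the block index is the first coordinate. -/
def prodBlockDiagonal [DecidableEq ν] (M : ν → Matrix κ κ R) : Matrix (ν × κ) (ν × κ) R :=
  (blockDiagonal' M).submatrix (Equiv.sigmaEquivProd ν κ).symm (Equiv.sigmaEquivProd ν κ).symm

variable [Fintype ν] [DecidableEq ν] [Fintype κ] [DecidableEq κ]

theorem isUnit_det_prodBlockDiagonal {M : ν → Matrix κ κ R} (hM : ∀ j, IsUnit (M j).det) :
    IsUnit (prodBlockDiagonal M).det := by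
  rw [prodBlockDiagonal, det_submatrix_equiv_self]
  exact isUnit_det_blockDiagonal' hM

theorem prodFromCols_mul_inv_prodBlockDiagonal_mul_transpose {l' : Type*}
    (f : ν → Matrix l κ R) {M : ν → Matrix κ κ R} (g : ν → Matrix l' κ R)
    (hM : ∀ j, IsUnit (M j).det) :
    prodFromCols f * (prodBlockDiagonal M)⁻¹ * (prodFromCols g)ᵀ = ∑ j, f j * (M j)⁻¹ * (g j)ᵀ := by
  rw [prodFromCols, prodFromCols, prodBlockDiagonal, inv_submatrix_equiv, transpose_submatrix,
    submatrix_mul_equiv, submatrix_mul_equiv]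
  exact sigmaFromCols_mul_inv_blockDiagonal'_mul_transpose f g hM

end Prod

end Matrix

namespace threeLevelSparse

variable {p q₁ q₂ m : ℕ} {n : Fin m → ℕ}
  (A11 : Matrix (Fin p) (Fin p) ℝ)
  (A12 : (i : Fin m) → Matrix (Fin p) (Fin q₁) ℝ)
  (A12' : (i : Fin m) → Fin (n i) → Matrix (Fin p) (Fin q₂) ℝ)
  (A22 : (i : Fin m) → Matrix (Fin q₁) (Fin q₁) ℝ)
  (A12'' : (i : Fin m) → Fin (n i) → Matrix (Fin q₁) (Fin q₂) ℝ)
  (A22' : (i : Fin m) → Fin (n i) → Matrix (Fin q₂) (Fin q₂) ℝ)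

def groupCols (i : Fin m) : Matrix (Fin p) (Fin q₁ ⊕ (Fin (n i) × Fin q₂)) ℝ :=
  fromCols (A12 i) (prodFromCols (A12' i))

def groupBlock (i : Fin m) :
    Matrix (Fin q₁ ⊕ (Fin (n i) × Fin q₂)) (Fin q₁ ⊕ (Fin (n i) × Fin q₂)) ℝ :=
  fromBlocks (A22 i) (prodFromCols (A12'' i)) (prodFromCols (A12'' i))ᵀ
    (prodBlockDiagonal (A22' i))

theorem eq_fromBlocks :
    threeLevelSparse A11 A12 A12' A22 A12'' A22' =
      fromBlocks A11 (sigmaFromCols (groupCols A12 A12')) (sigmaFromCols (groupCols A12 A12'))ᵀ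
        (blockDiagonal' (groupBlock A22 A12'' A22')) := by
  ext (a | ⟨i, a | ⟨j, a⟩⟩) (b | ⟨i', b | ⟨j', b⟩⟩)
  any_goals rfl
  all_goals
    obtain rfl | h := eq_or_ne i i'
    · simp +contextual [threeLevelSparse, groupBlock, prodFromCols, prodBlockDiagonal,
        sigmaFromCols, blockDiagonal'_apply]
    · simp [threeLevelSparse, h, blockDiagonal'_apply_ne _ _ _ h]

variable {A12 A12' A22 A12'' A22'}

theorem transpose_H12 {i : Fin m} (hA22'sym : ∀ j, (A22' i j).IsSymm) :
    (H12 A12 A12' A12'' A22' i)ᵀ = (A12 i)ᵀ - ∑ j, A12'' i j * (A22' i j)⁻¹ * (A12' i j)ᵀ := by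
  simp only [H12, transpose_sub, transpose_sum, transpose_mul, transpose_transpose,
    transpose_nonsing_inv, fun j => (hA22'sym j).eq, Matrix.mul_assoc]

theorem schur_groupBlock {i : Fin m} (hA22' : ∀ j, IsUnit (A22' i j).det) :
    A22 i - prodFromCols (A12'' i) * (prodBlockDiagonal (A22' i))⁻¹ * (prodFromCols (A12'' i))ᵀ =
      H22 A22 A12'' A22' i := by
  rw [prodFromCols_mul_inv_prodBlockDiagonal_mul_transpose _ _ hA22', H22]

theorem isUnit_det_groupBlock {i : Fin m} (hA22' : ∀ j, IsUnit (A22' i j).det)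
    (hH22 : IsUnit (H22 A22 A12'' A22' i).det) : IsUnit (groupBlock A22 A12'' A22' i).det := by
  have hE := isUnit_det_prodBlockDiagonal hA22'
  rw [groupBlock, det_fromBlocks₂₂_of_isUnit _ _ _ hE, schur_groupBlock hA22']
  exact hE.mul hH22

theorem groupCols_mul_inv_groupBlock_mul_transpose {i : Fin m}
    (hA22'sym : ∀ j, (A22' i j).IsSymm) (hA22' : ∀ j, IsUnit (A22' i j).det)
    (hH22 : IsUnit (H22 A22 A12'' A22' i).det) :
    groupCols A12 A12' i * (groupBlock A22 A12'' A22' i)⁻¹ * (groupCols A12 A12' i)ᵀ =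
      ∑ j, A12' i j * (A22' i j)⁻¹ * (A12' i j)ᵀ +
        H12 A12 A12' A12'' A22' i * (H22 A22 A12'' A22' i)⁻¹ * (H12 A12 A12' A12'' A22' i)ᵀ := by
  have hS := schur_groupBlock (A22 := A22) (A12'' := A12'') hA22'
  rw [groupCols, groupBlock, transpose_fromCols,
    fromCols_mul_inv_fromBlocks₂₂_mul_fromRows _ _ _ _ _ _ _ (isUnit_det_prodBlockDiagonal hA22')
      (hS ▸ hH22), hS, transpose_H12 hA22'sym, H12]
  simp only [prodFromCols_mul_inv_prodBlockDiagonal_mul_transpose _ _ hA22']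

theorem schur_blockDiagonal'_groupBlock (hA22'sym : ∀ i j, (A22' i j).IsSymm)
    (hA22' : ∀ i j, IsUnit (A22' i j).det)
    (hH22 : ∀ i, IsUnit (H22 A22 A12'' A22' i).det) :
    A11 - sigmaFromCols (groupCols A12 A12') * (blockDiagonal' (groupBlock A22 A12'' A22'))⁻¹ *
        (sigmaFromCols (groupCols A12 A12'))ᵀ =
      A11 - ∑ i, ∑ j, A12' i j * (A22' i j)⁻¹ * (A12' i j)ᵀ
        - ∑ i, H12 A12 A12' A12'' A22' i * (H22 A22 A12'' A22' i)⁻¹ *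
            (H12 A12 A12' A12'' A22' i)ᵀ := by
  rw [sigmaFromCols_mul_inv_blockDiagonal'_mul_transpose _ _
      fun i => isUnit_det_groupBlock (hA22' i) (hH22 i),
    Finset.sum_congr rfl fun i _ =>
      groupCols_mul_inv_groupBlock_mul_transpose (hA22'sym i) (hA22' i) (hH22 i),
    Finset.sum_add_distrib, sub_add_eq_sub_sub]

end threeLevelSparse

open threeLevelSparse in
theorem threeLevel_inverse_block11_general {p q₁ q₂ m : ℕ} {n : Fin m → ℕ}
    (A11 : Matrix (Fin p) (Fin p) ℝ)
    (A12 : (i : Fin m) → Matrix (Fin p) (Fin q₁) ℝ)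
    (A12' : (i : Fin m) → Fin (n i) → Matrix (Fin p) (Fin q₂) ℝ)
    (A22 : (i : Fin m) → Matrix (Fin q₁) (Fin q₁) ℝ)
    (A12'' : (i : Fin m) → Fin (n i) → Matrix (Fin q₁) (Fin q₂) ℝ)
    (A22' : (i : Fin m) → Fin (n i) → Matrix (Fin q₂) (Fin q₂) ℝ)
    (hA22'sym : ∀ i j, (A22' i j).IsSymm)
    (hA : IsUnit (threeLevelSparse A11 A12 A12' A22 A12'' A22').det)
    (hA22' : ∀ i j, IsUnit (A22' i j).det)
    (hH22 : ∀ i, IsUnit (H22 A22 A12'' A22' i).det)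
    :
    IsUnit (A11 - ∑ i, ∑ j, A12' i j * (A22' i j)⁻¹ * (A12' i j)ᵀ
        - ∑ i, H12 A12 A12' A12'' A22' i * (H22 A22 A12'' A22' i)⁻¹ *
            (H12 A12 A12' A12'' A22' i)ᵀ).det ∧
      (threeLevelSparse A11 A12 A12' A22 A12'' A22')⁻¹.submatrix Sum.inl Sum.inl =
        (A11 - ∑ i, ∑ j, A12' i j * (A22' i j)⁻¹ * (A12' i j)ᵀ
          - ∑ i, H12 A12 A12' A12'' A22' i * (H22 A22 A12'' A22' i)⁻¹ *
              (H12 A12 A12' A12'' A22' i)ᵀ)⁻¹ := by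
  have hD := isUnit_det_blockDiagonal' fun i => isUnit_det_groupBlock (hA22' i) (hH22 i)
  rw [eq_fromBlocks, det_fromBlocks₂₂_of_isUnit _ _ _ hD] at hA
  have hS := isUnit_of_mul_isUnit_right hA
  rw [← schur_blockDiagonal'_groupBlock A11 hA22'sym hA22' hH22, eq_fromBlocks,
    inv_fromBlocks₂₂_of_isUnit _ _ _ hD hS]
  exact ⟨hS, rfl⟩

theorem threeLevel_inverse_block11 {p q₁ q₂ m : ℕ} {n : Fin m → ℕ}
    (hp : 0 < p) (hq₁ : 0 < q₁) (hq₂ : 0 < q₂) (hm : 0 < m) (hn : ∀ i, 0 < n i)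
    (A11 : Matrix (Fin p) (Fin p) ℝ)
    (A12 : (i : Fin m) → Matrix (Fin p) (Fin q₁) ℝ)
    (A12' : (i : Fin m) → Fin (n i) → Matrix (Fin p) (Fin q₂) ℝ)
    (A22 : (i : Fin m) → Matrix (Fin q₁) (Fin q₁) ℝ)
    (A12'' : (i : Fin m) → Fin (n i) → Matrix (Fin q₁) (Fin q₂) ℝ)
    (A22' : (i : Fin m) → Fin (n i) → Matrix (Fin q₂) (Fin q₂) ℝ)
    (hA11sym : A11.IsSymm) (hA22sym : ∀ i, (A22 i).IsSymm)
    (hA22'sym : ∀ i j, (A22' i j).IsSymm)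
    (hA : IsUnit (threeLevelSparse A11 A12 A12' A22 A12'' A22').det)
    (hA22' : ∀ i j, IsUnit (A22' i j).det)
    (hH22 : ∀ i, IsUnit (H22 A22 A12'' A22' i).det)
    :
    IsUnit (A11 - ∑ i, ∑ j, A12' i j * (A22' i j)⁻¹ * (A12' i j)ᵀ
        - ∑ i, H12 A12 A12' A12'' A22' i * (H22 A22 A12'' A22' i)⁻¹ *
            (H12 A12 A12' A12'' A22' i)ᵀ).det ∧
      (threeLevelSparse A11 A12 A12' A22 A12'' A22')⁻¹.submatrix Sum.inl Sum.inl =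
        (A11 - ∑ i, ∑ j, A12' i j * (A22' i j)⁻¹ * (A12' i j)ᵀ
          - ∑ i, H12 A12 A12' A12'' A22' i * (H22 A22 A12'' A22' i)⁻¹ *
              (H12 A12 A12' A12'' A22' i)ᵀ)⁻¹ :=
  threeLevel_inverse_block11_general A11 A12 A12' A22 A12'' A22' hA22'sym hA hA22' hH22
end

section
/- Let A be an invertible three-level sparse matrix built from blocks A₁₁, A₁₂,ᵢ, A₁₂,ᵢⱼ, A₂₂,ᵢ, A₁₂,(i),(j), A₂₂,ᵢⱼ, suppose each A₂₂,ᵢⱼ is invertible and each H₂₂,ᵢ is invertible. Then for each 1 ≤ i ≤ m the sub-blocks of A⁻¹ satisfy A¹²ᶦ = −(H₂₂,ᵢ⁻¹ H₁₂,ᵢᵀ A¹¹)ᵀ and A²²ᶦ = H₂₂,ᵢ⁻¹ (I − H₁₂,ᵢᵀ A¹²ᶦ), where I is the q₁×q₁ identity matrix. -/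
open Matrix

section
set_option linter.unusedSectionVars false
variable {p q₁ q₂ m : ℕ} {n : Fin m → ℕ}
    (A11 : Matrix (Fin p) (Fin p) ℝ)
    (A12 : (i : Fin m) → Matrix (Fin p) (Fin q₁) ℝ)
    (A12' : (i : Fin m) → Fin (n i) → Matrix (Fin p) (Fin q₂) ℝ)
    (A22 : (i : Fin m) → Matrix (Fin q₁) (Fin q₁) ℝ)
    (A12'' : (i : Fin m) → Fin (n i) → Matrix (Fin q₁) (Fin q₂) ℝ)
    (A22' : (i : Fin m) → Fin (n i) → Matrix (Fin q₂) (Fin q₂) ℝ)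

variable {κ κ' : Type*} [Fintype κ] [DecidableEq κ]

lemma tls_row2 (B : Matrix (Fin p ⊕ (Σ i : Fin m, Fin q₁ ⊕ (Fin (n i) × Fin q₂))) κ ℝ)
    (f : κ' → κ) (i : Fin m) :
    ((threeLevelSparse A11 A12 A12' A22 A12'' A22') * B).submatrix
        (fun a => Sum.inr ⟨i, Sum.inl a⟩) f =
      (A12 i)ᵀ * B.submatrix Sum.inl f
      + A22 i * B.submatrix (fun a => Sum.inr ⟨i, Sum.inl a⟩) f
      + ∑ j, A12'' i j * B.submatrix (fun b => Sum.inr ⟨i, Sum.inr (j, b)⟩) f := by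
  ext a c
  simp only [submatrix_apply, mul_apply, Matrix.add_apply, Finset.sum_apply,
    transpose_apply]
  rw [Fintype.sum_sum_type, ← Finset.univ_sigma_univ, Finset.sum_sigma]
  simp only [threeLevelSparse, of_apply, Fintype.sum_sum_type, Fintype.sum_prod_type,
    ite_mul, zero_mul]
  rw [Finset.sum_eq_single i (fun b _ hb => by simp [Ne.symm hb]) (by simp)]
  simp [Matrix.sum_apply, mul_apply, add_assoc]

lemma tls_row3 (B : Matrix (Fin p ⊕ (Σ i : Fin m, Fin q₁ ⊕ (Fin (n i) × Fin q₂))) κ ℝ)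
    (f : κ' → κ) (i : Fin m) (j : Fin (n i)) :
    ((threeLevelSparse A11 A12 A12' A22 A12'' A22') * B).submatrix
        (fun b => Sum.inr ⟨i, Sum.inr (j, b)⟩) f =
      (A12' i j)ᵀ * B.submatrix Sum.inl f
      + (A12'' i j)ᵀ * B.submatrix (fun a => Sum.inr ⟨i, Sum.inl a⟩) f
      + A22' i j * B.submatrix (fun b => Sum.inr ⟨i, Sum.inr (j, b)⟩) f := by
  ext a c
  simp only [submatrix_apply, mul_apply, Matrix.add_apply, Finset.sum_apply,
    transpose_apply]
  rw [Fintype.sum_sum_type, ← Finset.univ_sigma_univ, Finset.sum_sigma]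
  simp only [threeLevelSparse, of_apply, Fintype.sum_sum_type, Fintype.sum_prod_type,
    ite_mul, zero_mul, Sigma.mk.inj_iff, heq_eq_eq]
  rw [Finset.sum_eq_single i (fun b _ hb => by simp [Ne.symm hb]) (by simp)]
  simp only [eq_self_iff_true, true_and, if_true]
  rw [Finset.sum_eq_single j (fun b _ hb => by simp [Ne.symm hb]) (by simp)]
  simp [Matrix.sum_apply, mul_apply, add_assoc]

lemma tls_isSymm (h11 : A11.IsSymm) (h22 : ∀ i, (A22 i).IsSymm)
    (h22' : ∀ i j, (A22' i j).IsSymm) :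
    (threeLevelSparse A11 A12 A12' A22 A12'' A22').IsSymm := by
  show _ᵀ = _
  ext x y
  rcases x with a | ⟨i, a | ⟨j, a⟩⟩ <;> rcases y with b | ⟨i', b | ⟨j', b⟩⟩ <;>
    simp only [transpose_apply, threeLevelSparse, of_apply]
  all_goals try rfl
  all_goals try exact congrFun (congrFun h11 a) b
  all_goals try
    (rcases eq_or_ne (⟨i, j⟩ : Σ i, Fin (n i)) ⟨i', j'⟩ with h | h
     · obtain ⟨rfl, h2⟩ := Sigma.mk.inj_iff.mp h
       obtain rfl := eq_of_heq h2
       simpa using congrFun (congrFun (h22' i j) a) b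
     · simp [h, Ne.symm h])
  all_goals
    rcases eq_or_ne i i' with rfl | h
  all_goals try simp [h, Ne.symm h]
  all_goals try simp
  all_goals simpa using congrFun (congrFun (h22 i) a) b


-- the key algebraic lemma
lemma tls_key (hA22' : ∀ i j, IsUnit (A22' i j).det)
    (hA22'sym : ∀ i j, (A22' i j).IsSymm)
    (B : Matrix (Fin p ⊕ (Σ i : Fin m, Fin q₁ ⊕ (Fin (n i) × Fin q₂))) κ ℝ)
    (f : κ' → κ) (i : Fin m) :
    (H12 A12 A12' A12'' A22' i)ᵀ * B.submatrix Sum.inl f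
      + (H22 A22 A12'' A22' i) * B.submatrix (fun a => Sum.inr ⟨i, Sum.inl a⟩) f
    = ((threeLevelSparse A11 A12 A12' A22 A12'' A22') * B).submatrix
        (fun a => Sum.inr ⟨i, Sum.inl a⟩) f
      - ∑ j, A12'' i j * (A22' i j)⁻¹ *
          (((threeLevelSparse A11 A12 A12' A22 A12'' A22') * B).submatrix
            (fun b => Sum.inr ⟨i, Sum.inr (j, b)⟩) f) := by
  set X := B.submatrix Sum.inl f with hX
  set Y := B.submatrix (fun a => Sum.inr ⟨i, Sum.inl a⟩) f with hY
  set Z : (j : Fin (n i)) → _ := fun j => B.submatrix (fun b => Sum.inr ⟨i, Sum.inr (j, b)⟩) f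
    with hZ
  have hsyminv : ∀ j, ((A22' i j)⁻¹)ᵀ = (A22' i j)⁻¹ := fun j => by
    rw [transpose_nonsing_inv, (hA22'sym i j).eq]
  have E1 := tls_row2 A11 A12 A12' A22 A12'' A22' B f i
  have E2 := fun j => tls_row3 A11 A12 A12' A22 A12'' A22' B f i j
  rw [E1]
  have h1 : (H12 A12 A12' A12'' A22' i)ᵀ
      = (A12 i)ᵀ - ∑ j, A12'' i j * ((A22' i j)⁻¹ * (A12' i j)ᵀ) := by
    rw [H12, transpose_sub, transpose_sum]
    congr 1
    refine Finset.sum_congr rfl fun j _ => ?_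
    rw [transpose_mul, transpose_mul, transpose_transpose, hsyminv]
  have h2 : ∀ j, A12'' i j * (A22' i j)⁻¹ *
      (((threeLevelSparse A11 A12 A12' A22 A12'' A22') * B).submatrix
        (fun b => Sum.inr ⟨i, Sum.inr (j, b)⟩) f)
      = A12'' i j * ((A22' i j)⁻¹ * ((A12' i j)ᵀ * X))
        + A12'' i j * ((A22' i j)⁻¹ * ((A12'' i j)ᵀ * Y))
        + A12'' i j * Z j := by
    intro j
    rw [E2 j, Matrix.mul_assoc, Matrix.mul_add, Matrix.mul_add, Matrix.mul_add,
      Matrix.mul_add]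
    congr 1
    rw [← Matrix.mul_assoc ((A22' i j)⁻¹), nonsing_inv_mul _ (hA22' i j), Matrix.one_mul]
  simp only [h1, H22, Matrix.sub_mul, Matrix.sum_mul, Matrix.mul_assoc, h2,
    Finset.sum_add_distrib]
  abel

end

theorem threeLevel_inverse_level2_blocks {p q₁ q₂ m : ℕ} {n : Fin m → ℕ}
    (hp : 0 < p) (hq₁ : 0 < q₁) (hq₂ : 0 < q₂) (hm : 0 < m) (hn : ∀ i, 0 < n i)
    (A11 : Matrix (Fin p) (Fin p) ℝ)
    (A12 : (i : Fin m) → Matrix (Fin p) (Fin q₁) ℝ)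
    (A12' : (i : Fin m) → Fin (n i) → Matrix (Fin p) (Fin q₂) ℝ)
    (A22 : (i : Fin m) → Matrix (Fin q₁) (Fin q₁) ℝ)
    (A12'' : (i : Fin m) → Fin (n i) → Matrix (Fin q₁) (Fin q₂) ℝ)
    (A22' : (i : Fin m) → Fin (n i) → Matrix (Fin q₂) (Fin q₂) ℝ)
    (hA11sym : A11.IsSymm) (hA22sym : ∀ i, (A22 i).IsSymm)
    (hA22'sym : ∀ i j, (A22' i j).IsSymm)
    (hA : IsUnit (threeLevelSparse A11 A12 A12' A22 A12'' A22').det)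
    (hA22' : ∀ i j, IsUnit (A22' i j).det)
    (hH22 : ∀ i, IsUnit (H22 A22 A12'' A22' i).det)
    :
    ∀ i : Fin m,
      (threeLevelSparse A11 A12 A12' A22 A12'' A22')⁻¹.submatrix
          Sum.inl (fun b => Sum.inr ⟨i, Sum.inl b⟩) =
        -((H22 A22 A12'' A22' i)⁻¹ * (H12 A12 A12' A12'' A22' i)ᵀ *
            (threeLevelSparse A11 A12 A12' A22 A12'' A22')⁻¹.submatrix
              Sum.inl Sum.inl)ᵀ ∧
      (threeLevelSparse A11 A12 A12' A22 A12'' A22')⁻¹.submatrix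
          (fun a => Sum.inr ⟨i, Sum.inl a⟩) (fun b => Sum.inr ⟨i, Sum.inl b⟩) =
        (H22 A22 A12'' A22' i)⁻¹ * (1 - (H12 A12 A12' A12'' A22' i)ᵀ *
          (threeLevelSparse A11 A12 A12' A22 A12'' A22')⁻¹.submatrix
            Sum.inl (fun b => Sum.inr ⟨i, Sum.inl b⟩)) := by
  intro i
  set M := threeLevelSparse A11 A12 A12' A22 A12'' A22' with hM
  set B := M⁻¹ with hB
  have hMB : M * B = 1 := mul_nonsing_inv _ hA
  have hBsym : Bᵀ = B := by
    rw [hB, transpose_nonsing_inv,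
      (tls_isSymm A11 A12 A12' A22 A12'' A22' hA11sym hA22sym hA22'sym).eq]
  have h0 : (1 : Matrix (Fin p ⊕ (Σ i : Fin m, Fin q₁ ⊕ (Fin (n i) × Fin q₂)))
      (Fin p ⊕ (Σ i : Fin m, Fin q₁ ⊕ (Fin (n i) × Fin q₂))) ℝ).submatrix
      (fun a : Fin q₁ => Sum.inr ⟨i, Sum.inl a⟩) Sum.inl = 0 := by
    ext a b; simp [one_apply]
  have h0' : ∀ j, (1 : Matrix (Fin p ⊕ (Σ i : Fin m, Fin q₁ ⊕ (Fin (n i) × Fin q₂)))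
      (Fin p ⊕ (Σ i : Fin m, Fin q₁ ⊕ (Fin (n i) × Fin q₂))) ℝ).submatrix
      (fun b : Fin q₂ => Sum.inr ⟨i, Sum.inr (j, b)⟩) Sum.inl = 0 := by
    intro j; ext a b; simp [one_apply]
  have h1 : (1 : Matrix (Fin p ⊕ (Σ i : Fin m, Fin q₁ ⊕ (Fin (n i) × Fin q₂)))
      (Fin p ⊕ (Σ i : Fin m, Fin q₁ ⊕ (Fin (n i) × Fin q₂))) ℝ).submatrix
      (fun a : Fin q₁ => Sum.inr ⟨i, Sum.inl a⟩)
      (fun b : Fin q₁ => Sum.inr ⟨i, Sum.inl b⟩) = 1 := by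
    ext a b; simp [one_apply]
  have h0'' : ∀ j, (1 : Matrix (Fin p ⊕ (Σ i : Fin m, Fin q₁ ⊕ (Fin (n i) × Fin q₂)))
      (Fin p ⊕ (Σ i : Fin m, Fin q₁ ⊕ (Fin (n i) × Fin q₂))) ℝ).submatrix
      (fun b : Fin q₂ => Sum.inr ⟨i, Sum.inr (j, b)⟩)
      (fun b : Fin q₁ => Sum.inr ⟨i, Sum.inl b⟩) = 0 := by
    intro j; ext a b; simp [one_apply]
  have k1 : (H12 A12 A12' A12'' A22' i)ᵀ * B.submatrix Sum.inl Sum.inl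
      + (H22 A22 A12'' A22' i) * B.submatrix (fun a => Sum.inr ⟨i, Sum.inl a⟩) Sum.inl
      = 0 := by
    have := tls_key A11 A12 A12' A22 A12'' A22' hA22' hA22'sym B Sum.inl i
    rw [hMB] at this
    rw [this, h0]
    simp [h0']
  have k2 : (H12 A12 A12' A12'' A22' i)ᵀ *
        B.submatrix Sum.inl (fun b => Sum.inr ⟨i, Sum.inl b⟩)
      + (H22 A22 A12'' A22' i) *
        B.submatrix (fun a => Sum.inr ⟨i, Sum.inl a⟩) (fun b => Sum.inr ⟨i, Sum.inl b⟩)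
      = 1 := by
    have := tls_key A11 A12 A12' A22 A12'' A22' hA22' hA22'sym B
      (fun b : Fin q₁ => Sum.inr ⟨i, Sum.inl b⟩) i
    rw [hMB] at this
    rw [this, h1]
    simp [h0'']
  have hY : B.submatrix (fun a => Sum.inr ⟨i, Sum.inl a⟩) Sum.inl
      = -((H22 A22 A12'' A22' i)⁻¹ *
          ((H12 A12 A12' A12'' A22' i)ᵀ * B.submatrix Sum.inl Sum.inl)) := by
    have e := eq_neg_of_add_eq_zero_right k1
    calc B.submatrix (fun a => Sum.inr ⟨i, Sum.inl a⟩) Sum.inl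
        = (H22 A22 A12'' A22' i)⁻¹ * ((H22 A22 A12'' A22' i) *
            B.submatrix (fun a => Sum.inr ⟨i, Sum.inl a⟩) Sum.inl) := by
          rw [← Matrix.mul_assoc, nonsing_inv_mul _ (hH22 i), Matrix.one_mul]
      _ = -((H22 A22 A12'' A22' i)⁻¹ *
            ((H12 A12 A12' A12'' A22' i)ᵀ * B.submatrix Sum.inl Sum.inl)) := by
          rw [e, Matrix.mul_neg]
  have hswap : B.submatrix Sum.inl (fun b => Sum.inr ⟨i, Sum.inl b⟩)
      = (B.submatrix (fun a => Sum.inr ⟨i, Sum.inl a⟩) Sum.inl)ᵀ := by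
    ext a b
    have := congrFun (congrFun hBsym (Sum.inl a)) (Sum.inr ⟨i, Sum.inl b⟩)
    simpa using this.symm
  constructor
  · rw [hswap, hY, Matrix.mul_assoc]
    simp
  · have e := eq_sub_of_add_eq' k2
    calc B.submatrix (fun a => Sum.inr ⟨i, Sum.inl a⟩) (fun b => Sum.inr ⟨i, Sum.inl b⟩)
        = (H22 A22 A12'' A22' i)⁻¹ * ((H22 A22 A12'' A22' i) *
            B.submatrix (fun a => Sum.inr ⟨i, Sum.inl a⟩) (fun b => Sum.inr ⟨i, Sum.inl b⟩)) := by
          rw [← Matrix.mul_assoc, nonsing_inv_mul _ (hH22 i), Matrix.one_mul]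
      _ = _ := by rw [e]
end

section
/- Let A be an invertible three-level sparse matrix built from blocks A₁₁, A₁₂,ᵢ, A₁₂,ᵢⱼ, A₂₂,ᵢ, A₁₂,(i),(j), A₂₂,ᵢⱼ, suppose each A₂₂,ᵢⱼ is invertible and each H₂₂,ᵢ is invertible. Then for each 1 ≤ i ≤ m and 1 ≤ j ≤ nᵢ the sub-blocks of A⁻¹ satisfy A¹²ᶦʲ = −( A₂₂,ᵢⱼ⁻¹ ( A₁₂,ᵢⱼᵀ A¹¹ + A₁₂,(i),(j)ᵀ (A¹²ᶦ)ᵀ ) )ᵀ, A¹²⁽ⁱ⁾⁽ʲ⁾ = −( A₂₂,ᵢⱼ⁻¹ ( A₁₂,ᵢⱼᵀ A¹²ᶦ + A₁₂,(i),(j)ᵀ A²²ᶦ ) )ᵀ, and A²²ᶦʲ = A₂₂,ᵢⱼ⁻¹ ( I − A₁₂,ᵢⱼᵀ A¹²ᶦʲ − A₁₂,(i),(j)ᵀ A¹²⁽ⁱ⁾⁽ʲ⁾ ), where I is the q₂×q₂ identity matrix. -/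
open Matrix

theorem threeLevel_inverse_level3_blocks {p q₁ q₂ m : ℕ} {n : Fin m → ℕ}
    (hp : 0 < p) (hq₁ : 0 < q₁) (hq₂ : 0 < q₂) (hm : 0 < m) (hn : ∀ i, 0 < n i)
    (A11 : Matrix (Fin p) (Fin p) ℝ)
    (A12 : (i : Fin m) → Matrix (Fin p) (Fin q₁) ℝ)
    (A12' : (i : Fin m) → Fin (n i) → Matrix (Fin p) (Fin q₂) ℝ)
    (A22 : (i : Fin m) → Matrix (Fin q₁) (Fin q₁) ℝ)
    (A12'' : (i : Fin m) → Fin (n i) → Matrix (Fin q₁) (Fin q₂) ℝ)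
    (A22' : (i : Fin m) → Fin (n i) → Matrix (Fin q₂) (Fin q₂) ℝ)
    (hA11sym : A11.IsSymm) (hA22sym : ∀ i, (A22 i).IsSymm)
    (hA22'sym : ∀ i j, (A22' i j).IsSymm)
    (hA : IsUnit (threeLevelSparse A11 A12 A12' A22 A12'' A22').det)
    (hA22' : ∀ i j, IsUnit (A22' i j).det)
    (hH22 : ∀ i, IsUnit (H22 A22 A12'' A22' i).det)
    :
    ∀ (i : Fin m) (j : Fin (n i)),
      (threeLevelSparse A11 A12 A12' A22 A12'' A22')⁻¹.submatrix
          Sum.inl (fun b => Sum.inr ⟨i, Sum.inr (j, b)⟩) =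
        -((A22' i j)⁻¹ *
            ((A12' i j)ᵀ *
              (threeLevelSparse A11 A12 A12' A22 A12'' A22')⁻¹.submatrix
                Sum.inl Sum.inl +
             (A12'' i j)ᵀ *
              ((threeLevelSparse A11 A12 A12' A22 A12'' A22')⁻¹.submatrix
                Sum.inl (fun b => Sum.inr ⟨i, Sum.inl b⟩))ᵀ))ᵀ ∧
      (threeLevelSparse A11 A12 A12' A22 A12'' A22')⁻¹.submatrix
          (fun a => Sum.inr ⟨i, Sum.inl a⟩) (fun b => Sum.inr ⟨i, Sum.inr (j, b)⟩) =
        -((A22' i j)⁻¹ *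
            ((A12' i j)ᵀ *
              (threeLevelSparse A11 A12 A12' A22 A12'' A22')⁻¹.submatrix
                Sum.inl (fun b => Sum.inr ⟨i, Sum.inl b⟩) +
             (A12'' i j)ᵀ *
              (threeLevelSparse A11 A12 A12' A22 A12'' A22')⁻¹.submatrix
                (fun a => Sum.inr ⟨i, Sum.inl a⟩) (fun b => Sum.inr ⟨i, Sum.inl b⟩)))ᵀ ∧
      (threeLevelSparse A11 A12 A12' A22 A12'' A22')⁻¹.submatrix
          (fun a => Sum.inr ⟨i, Sum.inr (j, a)⟩) (fun b => Sum.inr ⟨i, Sum.inr (j, b)⟩) =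
        (A22' i j)⁻¹ *
          (1 - (A12' i j)ᵀ *
              (threeLevelSparse A11 A12 A12' A22 A12'' A22')⁻¹.submatrix
                Sum.inl (fun b => Sum.inr ⟨i, Sum.inr (j, b)⟩)
             - (A12'' i j)ᵀ *
              (threeLevelSparse A11 A12 A12' A22 A12'' A22')⁻¹.submatrix
                (fun a => Sum.inr ⟨i, Sum.inl a⟩) (fun b => Sum.inr ⟨i, Sum.inr (j, b)⟩)) := by
  intro i j
  set S := threeLevelSparse A11 A12 A12' A22 A12'' A22' with hSdef
  set B := S⁻¹ with hBdef
  have hSsymm : Sᵀ = S := by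
    ext x y
    rcases x with a | ⟨i₁, b | ⟨j₁, a₁⟩⟩ <;> rcases y with c | ⟨i₂, d | ⟨j₂, a₂⟩⟩ <;>
      simp only [Matrix.transpose_apply, hSdef, threeLevelSparse, Matrix.of_apply]
    · exact congrFun (congrFun hA11sym a) c
    · split_ifs with h h' h'
      · subst h'; exact congrFun (congrFun (hA22sym i₁) b) d
      · exact absurd h.symm h'
      · exact absurd h'.symm h
      · rfl
    · split_ifs with h h' h'
      · subst h'; rfl
      · exact absurd h.symm h'
      · exact absurd h'.symm h
      · rfl
    · split_ifs with h h' h'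
      · subst h'; rfl
      · exact absurd h.symm h'
      · exact absurd h'.symm h
      · rfl
    · split_ifs with h h' h'
      · obtain ⟨rfl, h2⟩ := Sigma.mk.inj_iff.mp h'
        obtain rfl := eq_of_heq h2
        exact congrFun (congrFun (hA22'sym i₁ j₁) a₁) a₂
      · exact absurd h.symm h'
      · exact absurd h'.symm h
      · rfl
  have hBsymm : Bᵀ = B := by
    rw [hBdef, Matrix.transpose_nonsing_inv, hSsymm]
  have hone := Matrix.mul_nonsing_inv S hA
  have hinv := Matrix.nonsing_inv_mul (A22' i j) (hA22' i j)
  -- key row equation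
  have key : ∀ {κ : Type} [Fintype κ] (g : κ → (Fin p ⊕ (Σ i : Fin m, Fin q₁ ⊕ (Fin (n i) × Fin q₂)))),
      (A12' i j)ᵀ * B.submatrix Sum.inl g
      + (A12'' i j)ᵀ * B.submatrix (fun a => Sum.inr ⟨i, Sum.inl a⟩) g
      + A22' i j * B.submatrix (fun a => Sum.inr ⟨i, Sum.inr (j, a)⟩) g
      = (1 : Matrix (Fin p ⊕ (Σ i : Fin m, Fin q₁ ⊕ (Fin (n i) × Fin q₂)))
          (Fin p ⊕ (Σ i : Fin m, Fin q₁ ⊕ (Fin (n i) × Fin q₂))) ℝ).submatrix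
          (fun a => Sum.inr ⟨i, Sum.inr (j, a)⟩) g := by
    intro κ _ g
    ext a c
    have h := congrFun (congrFun hone (Sum.inr ⟨i, Sum.inr (j, a)⟩)) (g c)
    rw [Matrix.mul_apply, Fintype.sum_sum_type, ← Finset.univ_sigma_univ,
      Finset.sum_sigma] at h
    have hsplit : ∀ i' : Fin m,
        ∑ t : Fin q₁ ⊕ (Fin (n i') × Fin q₂),
          S (Sum.inr ⟨i, Sum.inr (j, a)⟩) (Sum.inr ⟨i', t⟩) * B (Sum.inr ⟨i', t⟩) (g c)
        = if i' = i then
            (∑ b, A12'' i j b a * B (Sum.inr ⟨i, Sum.inl b⟩) (g c))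
            + ∑ b, A22' i j a b * B (Sum.inr ⟨i, Sum.inr (j, b)⟩) (g c)
          else 0 := by
      intro i'
      rcases eq_or_ne i' i with rfl | hne
      · simp only [if_pos rfl]
        rw [Fintype.sum_sum_type, Fintype.sum_prod_type]
        congr 1
        · simp [hSdef, threeLevelSparse]
        · have hval : ∀ (j' : Fin (n i')) (b : Fin q₂),
              S (Sum.inr ⟨i', Sum.inr (j, a)⟩) (Sum.inr ⟨i', Sum.inr (j', b)⟩)
              = if j = j' then A22' i' j' a b else 0 := by
            intro j' b
            simp [hSdef, threeLevelSparse, Sigma.mk.inj_iff]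
          simp only [hval, ite_mul, zero_mul]
          rw [Finset.sum_comm]
          simp [Finset.sum_ite_eq]
      · rw [if_neg hne, Fintype.sum_sum_type]
        have h1 : ∀ b : Fin q₁,
            S (Sum.inr ⟨i, Sum.inr (j, a)⟩) (Sum.inr ⟨i', Sum.inl b⟩) = 0 := by
          intro b; simp [hSdef, threeLevelSparse, (hne.symm : i ≠ i')]
        have h2 : ∀ t : Fin (n i') × Fin q₂,
            S (Sum.inr ⟨i, Sum.inr (j, a)⟩) (Sum.inr ⟨i', Sum.inr t⟩) = 0 := by
          rintro ⟨j', b⟩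
          simp only [hSdef, threeLevelSparse, Matrix.of_apply]
          rw [if_neg]
          rintro h
          exact hne.symm (Sigma.mk.inj_iff.mp h).1
        simp [h1, h2]
    rw [Finset.sum_congr rfl (fun i' _ => hsplit i'), Finset.sum_ite_eq' Finset.univ i] at h
    simp only [Finset.mem_univ, if_pos] at h
    simp only [Matrix.add_apply, Matrix.mul_apply, Matrix.submatrix_apply,
      Matrix.transpose_apply]
    have hX : ∑ x : Fin p, S (Sum.inr ⟨i, Sum.inr (j, a)⟩) (Sum.inl x) * S⁻¹ (Sum.inl x) (g c)
        = ∑ x : Fin p, A12' i j x a * B (Sum.inl x) (g c) :=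
      Finset.sum_congr rfl fun b _ => by simp [hSdef, hBdef, threeLevelSparse]
    rw [hX] at h
    linarith [h]
  -- identity submatrix computations
  have h0l : (1 : Matrix (Fin p ⊕ (Σ i : Fin m, Fin q₁ ⊕ (Fin (n i) × Fin q₂)))
        (Fin p ⊕ (Σ i : Fin m, Fin q₁ ⊕ (Fin (n i) × Fin q₂))) ℝ).submatrix
        (fun a => Sum.inr ⟨i, Sum.inr (j, a)⟩) (Sum.inl : Fin p → _) = 0 := by
    ext a c; simp [Matrix.one_apply]
  have h0m : (1 : Matrix (Fin p ⊕ (Σ i : Fin m, Fin q₁ ⊕ (Fin (n i) × Fin q₂)))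
        (Fin p ⊕ (Σ i : Fin m, Fin q₁ ⊕ (Fin (n i) × Fin q₂))) ℝ).submatrix
        (fun a => Sum.inr ⟨i, Sum.inr (j, a)⟩) (fun b => Sum.inr ⟨i, Sum.inl b⟩) = 0 := by
    ext a c; simp [Matrix.one_apply]
  have h1r : (1 : Matrix (Fin p ⊕ (Σ i : Fin m, Fin q₁ ⊕ (Fin (n i) × Fin q₂)))
        (Fin p ⊕ (Σ i : Fin m, Fin q₁ ⊕ (Fin (n i) × Fin q₂))) ℝ).submatrix
        (fun a => Sum.inr ⟨i, Sum.inr (j, a)⟩) (fun b => Sum.inr ⟨i, Sum.inr (j, b)⟩)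
        = 1 := by
    ext a c
    simp [Matrix.one_apply, Sigma.mk.inj_iff]
  refine ⟨?_, ?_, ?_⟩
  · -- first claim
    have hk := key (Sum.inl : Fin p → _)
    rw [h0l] at hk
    have hXY := add_eq_zero_iff_eq_neg.mp hk
    rw [Matrix.transpose_submatrix, hBsymm, hXY, Matrix.mul_neg,
      Matrix.transpose_neg, neg_neg, ← Matrix.mul_assoc, hinv, Matrix.one_mul,
      Matrix.transpose_submatrix, hBsymm]
  · -- second claim
    have hk := key (fun b => Sum.inr ⟨i, Sum.inl b⟩)
    rw [h0m] at hk
    have hXY := add_eq_zero_iff_eq_neg.mp hk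
    rw [hXY, Matrix.mul_neg, Matrix.transpose_neg, neg_neg, ← Matrix.mul_assoc,
      hinv, Matrix.one_mul, Matrix.transpose_submatrix, hBsymm]
  · -- third claim
    have hk := key (fun b => Sum.inr ⟨i, Sum.inr (j, b)⟩)
    rw [h1r] at hk
    have h2 : A22' i j * B.submatrix (fun a => Sum.inr ⟨i, Sum.inr (j, a)⟩)
        (fun b => Sum.inr ⟨i, Sum.inr (j, b)⟩)
        = 1 - (A12' i j)ᵀ * B.submatrix Sum.inl (fun b => Sum.inr ⟨i, Sum.inr (j, b)⟩)
          - (A12'' i j)ᵀ * B.submatrix (fun a => Sum.inr ⟨i, Sum.inl a⟩)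
              (fun b => Sum.inr ⟨i, Sum.inr (j, b)⟩) := by
      rw [← hk]; abel
    rw [← h2, ← Matrix.mul_assoc, hinv, Matrix.one_mul]
end

section
/- Let A be an invertible three-level sparse matrix built from blocks A₁₁, A₁₂,ᵢ, A₁₂,ᵢⱼ, A₂₂,ᵢ, A₁₂,(i),(j), A₂₂,ᵢⱼ, suppose each A₂₂,ᵢⱼ is invertible and each H₂₂,ᵢ is invertible. Then the sub-block A¹¹ of A⁻¹ is invertible and det A = det((A¹¹)⁻¹) · ∏_{i=1}^m ( det( A₂₂,ᵢ − Σ_{j=1}^{nᵢ} A₁₂,(i),(j) A₂₂,ᵢⱼ⁻¹ A₁₂,(i),(j)ᵀ ) · ∏_{j=1}^{nᵢ} det(A₂₂,ᵢⱼ) ). -/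
open Matrix

lemma my_det_blockDiagonal' {ι : Type*} [Fintype ι] [DecidableEq ι] [LinearOrder ι]
    {κ : ι → Type*} [∀ i, Fintype (κ i)] [∀ i, DecidableEq (κ i)]
    (d : ∀ i, Matrix (κ i) (κ i) ℝ) :
    (Matrix.blockDiagonal' d).det = ∏ i, (d i).det := by
  rw [(Matrix.blockTriangular_blockDiagonal' d).det_fintype]
  refine Finset.prod_congr rfl fun k _ => ?_
  let f : κ k ≃ {a : Σ i, κ i // a.1 = k} :=
    { toFun := fun x => ⟨⟨k, x⟩, rfl⟩
      invFun := fun a => cast (congrArg κ a.2) a.1.2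
      left_inv := fun x => rfl
      right_inv := by rintro ⟨⟨i, x⟩, rfl⟩; rfl }
  have h : ((blockDiagonal' d).toSquareBlock Sigma.fst k).submatrix f f = d k := by
    ext x y
    simp [Matrix.toSquareBlock_def, f, Matrix.blockDiagonal'_apply_eq]
  rw [← h, Matrix.det_submatrix_equiv_self]

variable {q₁ q₂ nn : ℕ}

def auxE (g : Fin nn → Matrix (Fin q₂) (Fin q₂) ℝ) :
    Matrix (Fin nn × Fin q₂) (Fin nn × Fin q₂) ℝ :=
  of fun x y => if x.1 = y.1 then g x.1 x.2 y.2 else 0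

def auxB (f : Fin nn → Matrix (Fin q₁) (Fin q₂) ℝ) :
    Matrix (Fin q₁) (Fin nn × Fin q₂) ℝ :=
  of fun a x => f x.1 a x.2

lemma auxE_eq (g : Fin nn → Matrix (Fin q₂) (Fin q₂) ℝ) :
    auxE g = (blockDiagonal g).submatrix (Equiv.prodComm (Fin nn) (Fin q₂))
      (Equiv.prodComm (Fin nn) (Fin q₂)) := by
  ext ⟨j, a⟩ ⟨j', b⟩
  simp [auxE, blockDiagonal_apply, eq_comm]

lemma auxE_mul (g h : Fin nn → Matrix (Fin q₂) (Fin q₂) ℝ) :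
    auxE g * auxE h = auxE fun j => g j * h j := by
  rw [auxE_eq, auxE_eq, submatrix_mul_equiv, ← blockDiagonal_mul, ← auxE_eq]

lemma auxE_one : auxE (fun _ : Fin nn => (1 : Matrix (Fin q₂) (Fin q₂) ℝ)) = 1 := by
  rw [auxE_eq, show (fun _ : Fin nn => (1 : Matrix (Fin q₂) (Fin q₂) ℝ)) = 1 from rfl, blockDiagonal_one, submatrix_one_equiv]

lemma auxE_det (g : Fin nn → Matrix (Fin q₂) (Fin q₂) ℝ) :
    (auxE g).det = ∏ j, (g j).det := by
  rw [auxE_eq, det_submatrix_equiv_self, det_blockDiagonal]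

lemma auxB_mul_auxE (f : Fin nn → Matrix (Fin q₁) (Fin q₂) ℝ)
    (g : Fin nn → Matrix (Fin q₂) (Fin q₂) ℝ) :
    auxB f * auxE g = auxB fun j => f j * g j := by
  ext a x
  simp [auxB, auxE, mul_apply, Fintype.sum_prod_type, mul_ite, mul_zero,
    Finset.sum_ite_eq, Finset.sum_ite_eq']

lemma auxB_mul_auxBT (h f : Fin nn → Matrix (Fin q₁) (Fin q₂) ℝ) :
    auxB h * (auxB f)ᵀ = ∑ j, h j * (f j)ᵀ := by
  ext a b
  simp [auxB, mul_apply, Fintype.sum_prod_type, Matrix.sum_apply]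

lemma auxBEB (f : Fin nn → Matrix (Fin q₁) (Fin q₂) ℝ)
    (g : Fin nn → Matrix (Fin q₂) (Fin q₂) ℝ) :
    auxB f * auxE g * (auxB f)ᵀ = ∑ j, f j * g j * (f j)ᵀ := by
  rw [auxB_mul_auxE, auxB_mul_auxBT]

lemma auxE_invertible (g : Fin nn → Matrix (Fin q₂) (Fin q₂) ℝ)
    (hg : ∀ j, IsUnit (g j).det) :
    auxE g * auxE (fun j => (g j)⁻¹) = 1 ∧ auxE (fun j => (g j)⁻¹) * auxE g = 1 := by
  constructor
  · rw [auxE_mul, show (fun j => g j * (g j)⁻¹) = fun _ : Fin nn => (1 : Matrix (Fin q₂) (Fin q₂) ℝ)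
      from funext fun j => Matrix.mul_nonsing_inv _ (hg j), auxE_one]
  · rw [auxE_mul, show (fun j => (g j)⁻¹ * g j) = fun _ : Fin nn => (1 : Matrix (Fin q₂) (Fin q₂) ℝ)
      from funext fun j => Matrix.nonsing_inv_mul _ (hg j), auxE_one]

noncomputable def auxEInvertible (g : Fin nn → Matrix (Fin q₂) (Fin q₂) ℝ)
    (hg : ∀ j, IsUnit (g j).det) : Invertible (auxE g) :=
  invertibleOfRightInverse _ _ (auxE_invertible g hg).1

lemma auxE_invOf (g : Fin nn → Matrix (Fin q₂) (Fin q₂) ℝ) (hg : ∀ j, IsUnit (g j).det)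
    [Invertible (auxE g)] : ⅟(auxE g) = auxE (fun j => (g j)⁻¹) :=
  invOf_eq_right_inv (auxE_invertible g hg).1


variable {p q₁ q₂ m : ℕ} {n : Fin m → ℕ}

noncomputable def auxD (A22 : (i : Fin m) → Matrix (Fin q₁) (Fin q₁) ℝ)
    (A12'' : (i : Fin m) → Fin (n i) → Matrix (Fin q₁) (Fin q₂) ℝ)
    (A22' : (i : Fin m) → Fin (n i) → Matrix (Fin q₂) (Fin q₂) ℝ) (i : Fin m) :
    Matrix (Fin q₁ ⊕ (Fin (n i) × Fin q₂)) (Fin q₁ ⊕ (Fin (n i) × Fin q₂)) ℝ :=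
  fromBlocks (A22 i) (auxB (A12'' i)) (auxB (A12'' i))ᵀ (auxE (A22' i))

def auxTopB (A12 : (i : Fin m) → Matrix (Fin p) (Fin q₁) ℝ)
    (A12' : (i : Fin m) → Fin (n i) → Matrix (Fin p) (Fin q₂) ℝ) :
    Matrix (Fin p) (Σ i : Fin m, Fin q₁ ⊕ (Fin (n i) × Fin q₂)) ℝ :=
  of fun a x => Sum.elim (fun b => A12 x.1 a b) (fun y => A12' x.1 y.1 a y.2) x.2


lemma structural
    (A11 : Matrix (Fin p) (Fin p) ℝ)
    (A12 : (i : Fin m) → Matrix (Fin p) (Fin q₁) ℝ)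
    (A12' : (i : Fin m) → Fin (n i) → Matrix (Fin p) (Fin q₂) ℝ)
    (A22 : (i : Fin m) → Matrix (Fin q₁) (Fin q₁) ℝ)
    (A12'' : (i : Fin m) → Fin (n i) → Matrix (Fin q₁) (Fin q₂) ℝ)
    (A22' : (i : Fin m) → Fin (n i) → Matrix (Fin q₂) (Fin q₂) ℝ) :
    threeLevelSparse A11 A12 A12' A22 A12'' A22' =
      fromBlocks A11 (auxTopB A12 A12') (auxTopB A12 A12')ᵀ
        (blockDiagonal' (auxD A22 A12'' A22')) := by
  ext x y
  rcases x with a | ⟨i, a | ⟨j, a⟩⟩ <;> rcases y with b | ⟨i', b | ⟨j', b⟩⟩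
  · rfl
  · rfl
  · rfl
  · rfl
  · by_cases h : i = i'
    · subst h
      simp [threeLevelSparse, fromBlocks, blockDiagonal'_apply_eq, auxD, auxB, auxE,
        Sigma.mk.inj_iff]
      try (split_ifs with hj
           · subst hj; rfl
           · rfl)
    · simp [threeLevelSparse, fromBlocks, blockDiagonal'_apply_ne _ _ _ h, h,
        Sigma.mk.inj_iff]
  · by_cases h : i = i'
    · subst h
      simp [threeLevelSparse, fromBlocks, blockDiagonal'_apply_eq, auxD, auxB, auxE,
        Sigma.mk.inj_iff]
      try (split_ifs with hj
           · subst hj; rfl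
           · rfl)
    · simp [threeLevelSparse, fromBlocks, blockDiagonal'_apply_ne _ _ _ h, h,
        Sigma.mk.inj_iff]
  · rfl
  · by_cases h : i = i'
    · subst h
      simp [threeLevelSparse, fromBlocks, blockDiagonal'_apply_eq, auxD, auxB, auxE,
        Sigma.mk.inj_iff]
      try (split_ifs with hj
           · subst hj; rfl
           · rfl)
    · simp [threeLevelSparse, fromBlocks, blockDiagonal'_apply_ne _ _ _ h, h,
        Sigma.mk.inj_iff]
  · by_cases h : i = i'
    · subst h
      simp [threeLevelSparse, fromBlocks, blockDiagonal'_apply_eq, auxD, auxB, auxE,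
        Sigma.mk.inj_iff]
      try (split_ifs with hj
           · subst hj; rfl
           · rfl)
    · simp [threeLevelSparse, fromBlocks, blockDiagonal'_apply_ne _ _ _ h, h,
        Sigma.mk.inj_iff]


theorem threeLevel_det {p q₁ q₂ m : ℕ} {n : Fin m → ℕ}
    (hp : 0 < p) (hq₁ : 0 < q₁) (hq₂ : 0 < q₂) (hm : 0 < m) (hn : ∀ i, 0 < n i)
    (A11 : Matrix (Fin p) (Fin p) ℝ)
    (A12 : (i : Fin m) → Matrix (Fin p) (Fin q₁) ℝ)
    (A12' : (i : Fin m) → Fin (n i) → Matrix (Fin p) (Fin q₂) ℝ)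
    (A22 : (i : Fin m) → Matrix (Fin q₁) (Fin q₁) ℝ)
    (A12'' : (i : Fin m) → Fin (n i) → Matrix (Fin q₁) (Fin q₂) ℝ)
    (A22' : (i : Fin m) → Fin (n i) → Matrix (Fin q₂) (Fin q₂) ℝ)
    (hA11sym : A11.IsSymm) (hA22sym : ∀ i, (A22 i).IsSymm)
    (hA22'sym : ∀ i j, (A22' i j).IsSymm)
    (hA : IsUnit (threeLevelSparse A11 A12 A12' A22 A12'' A22').det)
    (hA22' : ∀ i j, IsUnit (A22' i j).det)
    (hH22 : ∀ i, IsUnit (H22 A22 A12'' A22' i).det)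
    :
    IsUnit ((threeLevelSparse A11 A12 A12' A22 A12'' A22')⁻¹.submatrix
        Sum.inl Sum.inl).det ∧
      (threeLevelSparse A11 A12 A12' A22 A12'' A22').det =
        (((threeLevelSparse A11 A12 A12' A22 A12'' A22')⁻¹.submatrix
            Sum.inl Sum.inl)⁻¹).det *
          ∏ i, ((A22 i - ∑ j, A12'' i j * (A22' i j)⁻¹ * (A12'' i j)ᵀ).det *
            ∏ j, (A22' i j).det) := by
  have hH22 : ∀ i, IsUnit (A22 i - ∑ j, A12'' i j * (A22' i j)⁻¹ * (A12'' i j)ᵀ).det :=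
    fun i => hH22 i
  rw [structural] at hA ⊢
  set B := auxTopB A12 A12' with hB
  set D := blockDiagonal' (auxD A22 A12'' A22') with hD
  haveI : ∀ i, Invertible (auxE (A22' i)) := fun i => auxEInvertible _ (hA22' i)
  have hdetDi : ∀ i, (auxD A22 A12'' A22' i).det =
      (A22 i - ∑ j, A12'' i j * (A22' i j)⁻¹ * (A12'' i j)ᵀ).det *
        ∏ j, (A22' i j).det := by
    intro i
    rw [auxD, det_fromBlocks₂₂, auxE_invOf _ (hA22' i), auxBEB, auxE_det, mul_comm]
  have hdetD : D.det = ∏ i, ((A22 i - ∑ j, A12'' i j * (A22' i j)⁻¹ * (A12'' i j)ᵀ).det *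
      ∏ j, (A22' i j).det) := by
    rw [hD, my_det_blockDiagonal']
    exact Finset.prod_congr rfl fun i _ => hdetDi i
  have hDunit : IsUnit D.det := by
    rw [hdetD, isUnit_iff_ne_zero, Finset.prod_ne_zero_iff]
    intro i _
    refine mul_ne_zero (isUnit_iff_ne_zero.mp (hH22 i)) ?_
    rw [Finset.prod_ne_zero_iff]
    exact fun j _ => isUnit_iff_ne_zero.mp (hA22' i j)
  haveI : Invertible D := Matrix.invertibleOfIsUnitDet D hDunit
  have hdetN : (fromBlocks A11 B Bᵀ D).det = D.det * (A11 - B * ⅟D * Bᵀ).det :=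
    det_fromBlocks₂₂ A11 B Bᵀ D
  set K := A11 - B * ⅟D * Bᵀ with hK
  have hKunit : IsUnit K.det := by
    rw [hdetN] at hA
    exact isUnit_of_mul_isUnit_right hA
  haveI : Invertible K := Matrix.invertibleOfIsUnitDet K hKunit
  haveI : Invertible (fromBlocks A11 B Bᵀ D) := Matrix.invertibleOfIsUnitDet _ hA
  have hblk : (fromBlocks A11 B Bᵀ D)⁻¹.submatrix Sum.inl Sum.inl = K⁻¹ := by
    rw [← Matrix.invOf_eq_nonsing_inv, Matrix.invOf_fromBlocks₂₂_eq, ← Matrix.invOf_eq_nonsing_inv]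
    rfl
  constructor
  · rw [hblk]
    exact K.isUnit_nonsing_inv_det hKunit
  · rw [hblk, K.nonsing_inv_nonsing_inv hKunit, hdetN, hdetD, mul_comm]
end

section
/- Let A be an invertible three-level sparse matrix built from blocks A₁₁, A₁₂,ᵢ, A₁₂,ᵢⱼ, A₂₂,ᵢ, A₁₂,(i),(j), A₂₂,ᵢⱼ, suppose each A₂₂,ᵢⱼ is invertible and each H₂₂,ᵢ is invertible, and let x, a be conformably partitioned vectors with A x = a, where x₁, a₁ are the p-blocks, x₂,ᵢ, a₂,ᵢ the q₁-blocks and x₂,ᵢⱼ, a₂,ᵢⱼ the q₂-blocks. Define h₂,ᵢ := a₂,ᵢ − Σ_{j=1}^{nᵢ} A₁₂,(i),(j) A₂₂,ᵢⱼ⁻¹ a₂,ᵢⱼ. Then x₁ = A¹¹ ( a₁ − Σ_{i=1}^m H₁₂,ᵢ H₂₂,ᵢ⁻¹ h₂,ᵢ − Σ_{i=1}^m Σ_{j=1}^{nᵢ} A₁₂,ᵢⱼ A₂₂,ᵢⱼ⁻¹ a₂,ᵢⱼ ), x₂,ᵢ = H₂₂,ᵢ⁻¹ ( h₂,ᵢ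 − H₁₂,ᵢᵀ x₁ ) for all i, and x₂,ᵢⱼ = A₂₂,ᵢⱼ⁻¹ ( a₂,ᵢⱼ − A₁₂,ᵢⱼᵀ x₁ − A₁₂,(i),(j)ᵀ x₂,ᵢ ) for all i, j. -/
open Matrix

/-! Back substitution. The level-3 rows express `x₂,ᵢⱼ` through `x₁` and `x₂,ᵢ`; substituting
this into the level-2 rows leaves `H₂₂,ᵢ x₂,ᵢ = h₂,ᵢ − H₁₂,ᵢᵀ x₁`, where the symmetry of the
`A₂₂,ᵢⱼ` is what identifies the coefficient of `x₁` with `H₁₂,ᵢᵀ`. For `x₁`, solve the level-2 and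
level-3 rows once more with the first block set to zero and right-hand side `a`; the solution `w`
gives `A (x − w) = (a₁ − (A w)₁, 0)`, and the same elimination computes
`(A w)₁ = Σᵢ H₁₂,ᵢ H₂₂,ᵢ⁻¹ h₂,ᵢ + Σᵢⱼ A₁₂,ᵢⱼ A₂₂,ᵢⱼ⁻¹ a₂,ᵢⱼ`, so `x₁ = (x − w)₁ = A¹¹ (a₁ − (A w)₁)`. -/

namespace Matrix

theorem mulVec_elim_zero_comp_inl {α β R : Type*} [Fintype α] [Fintype β]
    [NonUnitalNonAssocSemiring R] (N : Matrix (α ⊕ β) (α ⊕ β) R) (u : α → R) :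
    (N *ᵥ Sum.elim u 0) ∘ Sum.inl = N.submatrix Sum.inl Sum.inl *ᵥ u := by
  ext c
  simp [mulVec, dotProduct, Fintype.sum_sum_type]

variable {α β K : Type*} [Fintype α] [Fintype β] [DecidableEq α] [DecidableEq β] [CommRing K]

theorem eq_inv_mulVec_of_mulVec_eq {M : Matrix α α K} (hM : IsUnit M.det) {z t : α → K}
    (h : M *ᵥ z = t) : z = M⁻¹ *ᵥ t := by
  rw [← h, mulVec_mulVec, nonsing_inv_mul _ hM, one_mulVec]

theorem mulVec_eq_mul_inv_mulVec_of_mulVec_eq {M : Matrix α α K} (hM : IsUnit M.det)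
    {γ : Type*} (B : Matrix γ α K) {z t : α → K} (h : M *ᵥ z = t) :
    B *ᵥ z = (B * M⁻¹) *ᵥ t := by
  rw [eq_inv_mulVec_of_mulVec_eq hM h, mulVec_mulVec]

theorem comp_inl_eq_submatrix_inv_mulVec {M : Matrix (α ⊕ β) (α ⊕ β) K} (hM : IsUnit M.det)
    {x a w : α ⊕ β → K} (hx : M *ᵥ x = a) (hw₁ : w ∘ Sum.inl = 0)
    (hw₂ : (M *ᵥ w) ∘ Sum.inr = a ∘ Sum.inr) :
    x ∘ Sum.inl = M⁻¹.submatrix Sum.inl Sum.inl *ᵥ (a ∘ Sum.inl - (M *ᵥ w) ∘ Sum.inl) := by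
  have hres : M *ᵥ (x - w) = Sum.elim (a ∘ Sum.inl - (M *ᵥ w) ∘ Sum.inl) 0 := by
    ext (c | c)
    · simp [mulVec_sub, hx]
    · simpa [mulVec_sub, hx, sub_eq_zero] using (congrFun hw₂ c).symm
  have hx₁ : x ∘ Sum.inl = (x - w) ∘ Sum.inl := by
    ext c; simp [show w (Sum.inl c) = 0 from congrFun hw₁ c]
  rw [hx₁, eq_inv_mulVec_of_mulVec_eq hM hres, mulVec_elim_zero_comp_inl]

end Matrix

section ThreeLevel

open Finset

variable {p q₁ q₂ m : ℕ} {n : Fin m → ℕ}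

def midBlock {R : Type*} (v : Fin p ⊕ (Σ i : Fin m, Fin q₁ ⊕ (Fin (n i) × Fin q₂)) → R)
    (i : Fin m) : Fin q₁ → R :=
  fun b => v (Sum.inr ⟨i, Sum.inl b⟩)

def leafBlock {R : Type*} (v : Fin p ⊕ (Σ i : Fin m, Fin q₁ ⊕ (Fin (n i) × Fin q₂)) → R)
    (i : Fin m) (j : Fin (n i)) : Fin q₂ → R :=
  fun b => v (Sum.inr ⟨i, Sum.inr (j, b)⟩)

def threeLevelVec {R : Type*} (u : Fin p → R) (y : Fin m → Fin q₁ → R)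
    (z : (i : Fin m) → Fin (n i) → Fin q₂ → R) :
    Fin p ⊕ (Σ i : Fin m, Fin q₁ ⊕ (Fin (n i) × Fin q₂)) → R
  | Sum.inl c => u c
  | Sum.inr ⟨i, Sum.inl b⟩ => y i b
  | Sum.inr ⟨i, Sum.inr (j, b)⟩ => z i j b

@[simp] theorem comp_inl_threeLevelVec {R : Type*} (u : Fin p → R) (y : Fin m → Fin q₁ → R)
    (z : (i : Fin m) → Fin (n i) → Fin q₂ → R) : threeLevelVec u y z ∘ Sum.inl = u := rfl

@[simp] theorem midBlock_threeLevelVec {R : Type*} (u : Fin p → R) (y : Fin m → Fin q₁ → R)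
    (z : (i : Fin m) → Fin (n i) → Fin q₂ → R) (i : Fin m) :
    midBlock (threeLevelVec u y z) i = y i := rfl

@[simp] theorem leafBlock_threeLevelVec {R : Type*} (u : Fin p → R) (y : Fin m → Fin q₁ → R)
    (z : (i : Fin m) → Fin (n i) → Fin q₂ → R) (i : Fin m) (j : Fin (n i)) :
    leafBlock (threeLevelVec u y z) i j = z i j := rfl

variable (A11 : Matrix (Fin p) (Fin p) ℝ)
    (A12 : (i : Fin m) → Matrix (Fin p) (Fin q₁) ℝ)
    (A12' : (i : Fin m) → Fin (n i) → Matrix (Fin p) (Fin q₂) ℝ)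
    (A22 : (i : Fin m) → Matrix (Fin q₁) (Fin q₁) ℝ)
    (A12'' : (i : Fin m) → Fin (n i) → Matrix (Fin q₁) (Fin q₂) ℝ)
    (A22' : (i : Fin m) → Fin (n i) → Matrix (Fin q₂) (Fin q₂) ℝ)
    (v : Fin p ⊕ (Σ i : Fin m, Fin q₁ ⊕ (Fin (n i) × Fin q₂)) → ℝ)

theorem threeLevelSparse_mulVec_comp_inl :
    (threeLevelSparse A11 A12 A12' A22 A12'' A22' *ᵥ v) ∘ Sum.inl =
      A11 *ᵥ (v ∘ Sum.inl) + ∑ i, (A12 i *ᵥ midBlock v i + ∑ j, A12' i j *ᵥ leafBlock v i j) := by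
  ext c
  simp [threeLevelSparse, midBlock, leafBlock, mulVec, dotProduct, Fintype.sum_sum_type,
    Fintype.sum_sigma, Fintype.sum_prod_type, Finset.sum_apply, sum_add_distrib]

theorem midBlock_threeLevelSparse_mulVec (i : Fin m) :
    midBlock (threeLevelSparse A11 A12 A12' A22 A12'' A22' *ᵥ v) i =
      (A12 i)ᵀ *ᵥ (v ∘ Sum.inl) + A22 i *ᵥ midBlock v i + ∑ j, A12'' i j *ᵥ leafBlock v i j := by
  ext c
  simp [threeLevelSparse, midBlock, leafBlock, mulVec, dotProduct, Fintype.sum_sum_type,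
    Fintype.sum_sigma, Fintype.sum_prod_type, Finset.sum_apply, sum_add_distrib, add_assoc]

theorem leafBlock_threeLevelSparse_mulVec (i : Fin m) (j : Fin (n i)) :
    leafBlock (threeLevelSparse A11 A12 A12' A22 A12'' A22' *ᵥ v) i j =
      (A12' i j)ᵀ *ᵥ (v ∘ Sum.inl) + (A12'' i j)ᵀ *ᵥ midBlock v i
        + A22' i j *ᵥ leafBlock v i j := by
  ext c
  simp only [leafBlock, mulVec, dotProduct, threeLevelSparse, Sigma.mk.injEq, of_apply,
    Fintype.sum_sum_type, Fintype.sum_sigma, ite_mul, zero_mul, sum_ite_irrel, sum_const_zero,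
    Fintype.sum_prod_type, sum_add_distrib, sum_ite_eq, mem_univ, ↓reduceIte, Pi.add_apply,
    transpose_apply, Function.comp_apply, midBlock, add_assoc, add_right_inj]
  rw [sum_eq_single i (fun b _ hb => by simp [Ne.symm hb]) (by simp),
    sum_eq_single j (fun b _ hb => by simp [Ne.symm hb]) (by simp)]
  simp

theorem comp_inr_eq_of_blocks_eq {R : Type*}
    {v v' : Fin p ⊕ (Σ i : Fin m, Fin q₁ ⊕ (Fin (n i) × Fin q₂)) → R}
    (hmid : ∀ i, midBlock v i = midBlock v' i)
    (hleaf : ∀ i j, leafBlock v i j = leafBlock v' i j) : v ∘ Sum.inr = v' ∘ Sum.inr := by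
  funext ⟨i, b⟩
  rcases b with b | ⟨j, b⟩
  exacts [congrFun (hmid i) b, congrFun (hleaf i j) b]

noncomputable def h2 (A12'' : (i : Fin m) → Fin (n i) → Matrix (Fin q₁) (Fin q₂) ℝ)
    (A22' : (i : Fin m) → Fin (n i) → Matrix (Fin q₂) (Fin q₂) ℝ)
    (a : Fin p ⊕ (Σ i : Fin m, Fin q₁ ⊕ (Fin (n i) × Fin q₂)) → ℝ) (i : Fin m) : Fin q₁ → ℝ :=
  midBlock a i - ∑ j, (A12'' i j * (A22' i j)⁻¹) *ᵥ leafBlock a i j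

variable {A11 A12 A12' A22 A12'' A22'}

theorem transpose_H12 {i : Fin m} (hsym : ∀ j, (A22' i j).IsSymm) :
    (H12 A12 A12' A12'' A22' i)ᵀ = (A12 i)ᵀ - ∑ j, A12'' i j * (A22' i j)⁻¹ * (A12' i j)ᵀ := by
  simp [H12, transpose_sum, Matrix.mul_assoc, transpose_nonsing_inv, (hsym _).eq]

theorem mid_row_eq_H22_mulVec_add {i : Fin m} (hA22' : ∀ j, IsUnit (A22' i j).det)
    {u : Fin p → ℝ} {y : Fin q₁ → ℝ} {z s : Fin (n i) → Fin q₂ → ℝ}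
    (hleaf : ∀ j, (A12' i j)ᵀ *ᵥ u + (A12'' i j)ᵀ *ᵥ y + A22' i j *ᵥ z j = s j) :
    (A12 i)ᵀ *ᵥ u + A22 i *ᵥ y + ∑ j, A12'' i j *ᵥ z j =
      H22 A22 A12'' A22' i *ᵥ y + ∑ j, (A12'' i j * (A22' i j)⁻¹) *ᵥ s j
        + ((A12 i)ᵀ - ∑ j, A12'' i j * (A22' i j)⁻¹ * (A12' i j)ᵀ) *ᵥ u := by
  have hz : ∀ j, A12'' i j *ᵥ z j =
      (A12'' i j * (A22' i j)⁻¹) *ᵥ (s j - (A12' i j)ᵀ *ᵥ u - (A12'' i j)ᵀ *ᵥ y) :=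
    fun j => mulVec_eq_mul_inv_mulVec_of_mulVec_eq (hA22' j) _ (by rw [← hleaf j]; abel)
  simp only [hz, H22, sub_mulVec, sum_mulVec, mulVec_sub, ← mulVec_mulVec, sum_sub_distrib]
  abel

theorem top_row_eq_H12_mulVec_add {i : Fin m} (hA22' : ∀ j, IsUnit (A22' i j).det)
    {y : Fin q₁ → ℝ} {z s : Fin (n i) → Fin q₂ → ℝ}
    (hleaf : ∀ j, (A12'' i j)ᵀ *ᵥ y + A22' i j *ᵥ z j = s j) :
    A12 i *ᵥ y + ∑ j, A12' i j *ᵥ z j =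
      H12 A12 A12' A12'' A22' i *ᵥ y + ∑ j, (A12' i j * (A22' i j)⁻¹) *ᵥ s j := by
  have hz : ∀ j, A12' i j *ᵥ z j = (A12' i j * (A22' i j)⁻¹) *ᵥ (s j - (A12'' i j)ᵀ *ᵥ y) :=
    fun j => mulVec_eq_mul_inv_mulVec_of_mulVec_eq (hA22' j) _ (by rw [← hleaf j]; abel)
  simp only [hz, H12, sub_mulVec, sum_mulVec, mulVec_sub, ← mulVec_mulVec, sum_sub_distrib]
  abel

theorem exists_threeLevelSparse_mulVec_comp_inr_eq (hA22' : ∀ i j, IsUnit (A22' i j).det)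
    (hH22 : ∀ i, IsUnit (H22 A22 A12'' A22' i).det)
    (a : Fin p ⊕ (Σ i : Fin m, Fin q₁ ⊕ (Fin (n i) × Fin q₂)) → ℝ) :
    ∃ w, w ∘ Sum.inl = 0 ∧
      (threeLevelSparse A11 A12 A12' A22 A12'' A22' *ᵥ w) ∘ Sum.inr = a ∘ Sum.inr ∧
      (threeLevelSparse A11 A12 A12' A22 A12'' A22' *ᵥ w) ∘ Sum.inl =
        ∑ i, (H12 A12 A12' A12'' A22' i * (H22 A22 A12'' A22' i)⁻¹) *ᵥ h2 A12'' A22' a i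
          + ∑ i, ∑ j, (A12' i j * (A22' i j)⁻¹) *ᵥ leafBlock a i j := by
  set y : Fin m → Fin q₁ → ℝ := fun i => (H22 A22 A12'' A22' i)⁻¹ *ᵥ h2 A12'' A22' a i
  set z : (i : Fin m) → Fin (n i) → Fin q₂ → ℝ :=
    fun i j => (A22' i j)⁻¹ *ᵥ (leafBlock a i j - (A12'' i j)ᵀ *ᵥ y i)
  have hy : ∀ i, H22 A22 A12'' A22' i *ᵥ y i = h2 A12'' A22' a i := fun i => by
    rw [mulVec_mulVec, mul_nonsing_inv _ (hH22 i), one_mulVec]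
  have hz : ∀ i j, (A12'' i j)ᵀ *ᵥ y i + A22' i j *ᵥ z i j = leafBlock a i j := fun i j => by
    rw [mulVec_mulVec (M := A22' i j), mul_nonsing_inv _ (hA22' i j), one_mulVec]
    abel
  refine ⟨threeLevelVec 0 y z, rfl, comp_inr_eq_of_blocks_eq (fun i => ?_) (fun i j => ?_), ?_⟩
  · rw [midBlock_threeLevelSparse_mulVec, comp_inl_threeLevelVec, midBlock_threeLevelVec,
      mid_row_eq_H22_mulVec_add (A12' := A12') (hA22' i) (fun j => by simpa using hz i j),
      hy, mulVec_zero, h2]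
    simp
  · simpa [leafBlock_threeLevelSparse_mulVec] using hz i j
  · rw [threeLevelSparse_mulVec_comp_inl, comp_inl_threeLevelVec, mulVec_zero, zero_add,
      ← sum_add_distrib]
    refine sum_congr rfl fun i _ => ?_
    simp only [midBlock_threeLevelVec, leafBlock_threeLevelVec]
    rw [top_row_eq_H12_mulVec_add (hA22' i) (hz i), mulVec_mulVec]

variable {x a : Fin p ⊕ (Σ i : Fin m, Fin q₁ ⊕ (Fin (n i) × Fin q₂)) → ℝ}

theorem leafBlock_eq_of_mulVec_eq
    (hxa : threeLevelSparse A11 A12 A12' A22 A12'' A22' *ᵥ x = a)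
    (hA22' : ∀ i j, IsUnit (A22' i j).det) (i : Fin m) (j : Fin (n i)) :
    leafBlock x i j = (A22' i j)⁻¹ *ᵥ
      (leafBlock a i j - (A12' i j)ᵀ *ᵥ (x ∘ Sum.inl) - (A12'' i j)ᵀ *ᵥ midBlock x i) := by
  refine eq_inv_mulVec_of_mulVec_eq (hA22' i j) ?_
  rw [← hxa, leafBlock_threeLevelSparse_mulVec]
  abel

theorem midBlock_eq_of_mulVec_eq
    (hxa : threeLevelSparse A11 A12 A12' A22 A12'' A22' *ᵥ x = a)
    (hsym : ∀ i j, (A22' i j).IsSymm)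
    (hA22' : ∀ i j, IsUnit (A22' i j).det) (hH22 : ∀ i, IsUnit (H22 A22 A12'' A22' i).det)
    (i : Fin m) :
    midBlock x i = (H22 A22 A12'' A22' i)⁻¹ *ᵥ
      (h2 A12'' A22' a i - (H12 A12 A12' A12'' A22' i)ᵀ *ᵥ (x ∘ Sum.inl)) := by
  refine eq_inv_mulVec_of_mulVec_eq (hH22 i) ?_
  have hleaf : ∀ j, (A12' i j)ᵀ *ᵥ (x ∘ Sum.inl) + (A12'' i j)ᵀ *ᵥ midBlock x i
      + A22' i j *ᵥ leafBlock x i j = leafBlock a i j := fun j => by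
    rw [← hxa, leafBlock_threeLevelSparse_mulVec]
  have hmid := mid_row_eq_H22_mulVec_add (A12 := A12) (A22 := A22) (hA22' i) hleaf
  rw [← midBlock_threeLevelSparse_mulVec A11, hxa, ← transpose_H12 (hsym i)] at hmid
  rw [h2, hmid]
  abel

theorem comp_inl_eq_of_mulVec_eq
    (hxa : threeLevelSparse A11 A12 A12' A22 A12'' A22' *ᵥ x = a)
    (hA : IsUnit (threeLevelSparse A11 A12 A12' A22 A12'' A22').det)
    (hA22' : ∀ i j, IsUnit (A22' i j).det) (hH22 : ∀ i, IsUnit (H22 A22 A12'' A22' i).det) :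
    x ∘ Sum.inl = (threeLevelSparse A11 A12 A12' A22 A12'' A22')⁻¹.submatrix Sum.inl Sum.inl *ᵥ
      (a ∘ Sum.inl
        - ∑ i, (H12 A12 A12' A12'' A22' i * (H22 A22 A12'' A22' i)⁻¹) *ᵥ h2 A12'' A22' a i
        - ∑ i, ∑ j, (A12' i j * (A22' i j)⁻¹) *ᵥ leafBlock a i j) := by
  obtain ⟨w, hw_inl, hw_inr, hw_top⟩ := exists_threeLevelSparse_mulVec_comp_inr_eq
    (A11 := A11) (A12 := A12) hA22' hH22 a
  rw [comp_inl_eq_submatrix_inv_mulVec hA hxa hw_inl hw_inr, hw_top, sub_add_eq_sub_sub]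

end ThreeLevel

theorem threeLevel_linear_system_general {p q₁ q₂ m : ℕ} {n : Fin m → ℕ}
    (A11 : Matrix (Fin p) (Fin p) ℝ)
    (A12 : (i : Fin m) → Matrix (Fin p) (Fin q₁) ℝ)
    (A12' : (i : Fin m) → Fin (n i) → Matrix (Fin p) (Fin q₂) ℝ)
    (A22 : (i : Fin m) → Matrix (Fin q₁) (Fin q₁) ℝ)
    (A12'' : (i : Fin m) → Fin (n i) → Matrix (Fin q₁) (Fin q₂) ℝ)
    (A22' : (i : Fin m) → Fin (n i) → Matrix (Fin q₂) (Fin q₂) ℝ)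
    (hA22'sym : ∀ i j, (A22' i j).IsSymm)
    (hA : IsUnit (threeLevelSparse A11 A12 A12' A22 A12'' A22').det)
    (hA22' : ∀ i j, IsUnit (A22' i j).det)
    (hH22 : ∀ i, IsUnit (H22 A22 A12'' A22' i).det)
    (x a : (Fin p ⊕ (Σ i : Fin m, Fin q₁ ⊕ (Fin (n i) × Fin q₂))) → ℝ)
    (hxa : (threeLevelSparse A11 A12 A12' A22 A12'' A22').mulVec x = a) :
    (x ∘ Sum.inl) =
      ((threeLevelSparse A11 A12 A12' A22 A12'' A22')⁻¹.submatrix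
          Sum.inl Sum.inl).mulVec
        ((a ∘ Sum.inl)
          - ∑ i, (H12 A12 A12' A12'' A22' i * (H22 A22 A12'' A22' i)⁻¹).mulVec
              ((fun b => a (Sum.inr ⟨i, Sum.inl b⟩))
                - ∑ j, (A12'' i j * (A22' i j)⁻¹).mulVec
                    (fun b => a (Sum.inr ⟨i, Sum.inr (j, b)⟩)))
          - ∑ i, ∑ j, (A12' i j * (A22' i j)⁻¹).mulVec
              (fun b => a (Sum.inr ⟨i, Sum.inr (j, b)⟩))) ∧
    (∀ i : Fin m,
      (fun b => x (Sum.inr ⟨i, Sum.inl b⟩)) =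
        ((H22 A22 A12'' A22' i)⁻¹).mulVec
          (((fun b => a (Sum.inr ⟨i, Sum.inl b⟩))
              - ∑ j, (A12'' i j * (A22' i j)⁻¹).mulVec
                  (fun b => a (Sum.inr ⟨i, Sum.inr (j, b)⟩)))
            - (H12 A12 A12' A12'' A22' i)ᵀ.mulVec (x ∘ Sum.inl))) ∧
    ∀ (i : Fin m) (j : Fin (n i)),
      (fun b => x (Sum.inr ⟨i, Sum.inr (j, b)⟩)) =
        ((A22' i j)⁻¹).mulVec
          ((fun b => a (Sum.inr ⟨i, Sum.inr (j, b)⟩))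
            - (A12' i j)ᵀ.mulVec (x ∘ Sum.inl)
            - (A12'' i j)ᵀ.mulVec (fun b => x (Sum.inr ⟨i, Sum.inl b⟩))) :=
  ⟨comp_inl_eq_of_mulVec_eq hxa hA hA22' hH22,
    midBlock_eq_of_mulVec_eq hxa hA22'sym hA22' hH22, leafBlock_eq_of_mulVec_eq hxa hA22'⟩

theorem threeLevel_linear_system {p q₁ q₂ m : ℕ} {n : Fin m → ℕ}
    (hp : 0 < p) (hq₁ : 0 < q₁) (hq₂ : 0 < q₂) (hm : 0 < m) (hn : ∀ i, 0 < n i)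
    (A11 : Matrix (Fin p) (Fin p) ℝ)
    (A12 : (i : Fin m) → Matrix (Fin p) (Fin q₁) ℝ)
    (A12' : (i : Fin m) → Fin (n i) → Matrix (Fin p) (Fin q₂) ℝ)
    (A22 : (i : Fin m) → Matrix (Fin q₁) (Fin q₁) ℝ)
    (A12'' : (i : Fin m) → Fin (n i) → Matrix (Fin q₁) (Fin q₂) ℝ)
    (A22' : (i : Fin m) → Fin (n i) → Matrix (Fin q₂) (Fin q₂) ℝ)
    (hA11sym : A11.IsSymm) (hA22sym : ∀ i, (A22 i).IsSymm)
    (hA22'sym : ∀ i j, (A22' i j).IsSymm)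
    (hA : IsUnit (threeLevelSparse A11 A12 A12' A22 A12'' A22').det)
    (hA22' : ∀ i j, IsUnit (A22' i j).det)
    (hH22 : ∀ i, IsUnit (H22 A22 A12'' A22' i).det)
    (x a : (Fin p ⊕ (Σ i : Fin m, Fin q₁ ⊕ (Fin (n i) × Fin q₂))) → ℝ)
    (hxa : (threeLevelSparse A11 A12 A12' A22 A12'' A22').mulVec x = a) :
    (x ∘ Sum.inl) =
      ((threeLevelSparse A11 A12 A12' A22 A12'' A22')⁻¹.submatrix
          Sum.inl Sum.inl).mulVec
        ((a ∘ Sum.inl)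
          - ∑ i, (H12 A12 A12' A12'' A22' i * (H22 A22 A12'' A22' i)⁻¹).mulVec
              ((fun b => a (Sum.inr ⟨i, Sum.inl b⟩))
                - ∑ j, (A12'' i j * (A22' i j)⁻¹).mulVec
                    (fun b => a (Sum.inr ⟨i, Sum.inr (j, b)⟩)))
          - ∑ i, ∑ j, (A12' i j * (A22' i j)⁻¹).mulVec
              (fun b => a (Sum.inr ⟨i, Sum.inr (j, b)⟩))) ∧
    (∀ i : Fin m,
      (fun b => x (Sum.inr ⟨i, Sum.inl b⟩)) =
        ((H22 A22 A12'' A22' i)⁻¹).mulVec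
          (((fun b => a (Sum.inr ⟨i, Sum.inl b⟩))
              - ∑ j, (A12'' i j * (A22' i j)⁻¹).mulVec
                  (fun b => a (Sum.inr ⟨i, Sum.inr (j, b)⟩)))
            - (H12 A12 A12' A12'' A22' i)ᵀ.mulVec (x ∘ Sum.inl))) ∧
    ∀ (i : Fin m) (j : Fin (n i)),
      (fun b => x (Sum.inr ⟨i, Sum.inr (j, b)⟩)) =
        ((A22' i j)⁻¹).mulVec
          ((fun b => a (Sum.inr ⟨i, Sum.inr (j, b)⟩))
            - (A12' i j)ᵀ.mulVec (x ∘ Sum.inl)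
            - (A12'' i j)ᵀ.mulVec (fun b => x (Sum.inr ⟨i, Sum.inl b⟩))) :=
  threeLevel_linear_system_general A11 A12 A12' A22 A12'' A22' hA22'sym hA hA22' hH22 x a hxa
end
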